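/- arXiv:1202.6219 — 9 statements merged into one kernel-verified Lean document; each statement's English description precedes it below -/
import Mathlib

section
/- Let G be a digraph on n vertices with minimum semidegree δ⁰(G) ≥ (1/2+ε)n, where 0 < ν ≤ τ ≤ ε < 1 and ε ≥ 2ν/τ. Then G is a robust (ν,τ)-outexpander, i.e., for every set S ⊆ V(G) with τn ≤ |S| ≤ (1-τ)n, the set of vertices with at least νn inneighbours in S has size at least |S| + νn. -/
open Finset
open scoped Classical

/-- The out-degree of a vertex in a digraph. -/
noncomputable def outDeg {V : Type*} [Fintype V] (G : V → V → Prop) (x : V) : ℕ :=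
  (Finset.univ.filter (fun y => G x y)).card

/-- The in-degree of a vertex in a digraph. -/
noncomputable def inDeg {V : Type*} [Fintype V] (G : V → V → Prop) (x : V) : ℕ :=
  (Finset.univ.filter (fun y => G y x)).card

/-- The ν-robust outneighbourhood of a set `S`: all vertices with at least
`ν * n` inneighbours in `S`. -/
noncomputable def robustOutNbhd {V : Type*} [Fintype V] (G : V → V → Prop) (ν : ℝ)
    (S : Finset V) : Finset V :=
  Finset.univ.filter (fun x => ν * (Fintype.card V : ℝ) ≤ ((S.filter (fun y => G y x)).card : ℝ))

/-- `G` is a robust `(ν,τ)`-outexpander. -/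
def IsRobustOutexpander {V : Type*} [Fintype V] (G : V → V → Prop) (ν τ : ℝ) : Prop :=
  ∀ S : Finset V, τ * (Fintype.card V : ℝ) ≤ (S.card : ℝ) →
    (S.card : ℝ) ≤ (1 - τ) * (Fintype.card V : ℝ) →
    (S.card : ℝ) + ν * (Fintype.card V : ℝ) ≤ ((robustOutNbhd G ν S).card : ℝ)

/-! Small sets `S` are handled by double counting the edges leaving `S`: a vertex outside
`RN⁺(S)` receives fewer than `νn` of them and a vertex inside at most `|S|`, while `S` sends out at
least `|S|(1/2 + ε)n`; the error term `νn²` is absorbed using `τn ≤ |S|` and `2ν ≤ ετ`.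
For large `S`, every vertex has at least `|S| + (1/2 + ε)n - n ≥ νn` inneighbours in `S`, so
`RN⁺(S)` is the whole vertex set. -/

section

variable {V : Type*} [Fintype V] (G : V → V → Prop)

theorem sum_card_filter_eq_sum_outDeg (S : Finset V) :
    ∑ x, #{y ∈ S | G y x} = ∑ y ∈ S, outDeg G y :=
  (sum_card_bipartiteAbove_eq_sum_card_bipartiteBelow (s := S) (t := univ) (r := G)).symm

theorem sum_outDeg_le_card_robustOutNbhd {ν : ℝ} (hν : 0 ≤ ν) (S : Finset V) :
    ∑ y ∈ S, (outDeg G y : ℝ) ≤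
      #(robustOutNbhd G ν S) * #S + Fintype.card V * (ν * Fintype.card V) := by
  have hpointwise (x : V) : (#{y ∈ S | G y x} : ℝ) ≤
      (if x ∈ robustOutNbhd G ν S then (#S : ℝ) else 0) + ν * Fintype.card V := by
    split_ifs with hx
    · have : (#{y ∈ S | G y x} : ℝ) ≤ #S := mod_cast card_filter_le S _
      have : 0 ≤ ν * Fintype.card V := by positivity
      linarith
    · simp only [robustOutNbhd, mem_filter, mem_univ, true_and, not_le] at hx
      linarith
  calc ∑ y ∈ S, (outDeg G y : ℝ) = ∑ x, (#{y ∈ S | G y x} : ℝ) := by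
        exact_mod_cast (sum_card_filter_eq_sum_outDeg G S).symm
    _ ≤ ∑ x, ((if x ∈ robustOutNbhd G ν S then (#S : ℝ) else 0) + ν * Fintype.card V) :=
        sum_le_sum fun x _ => hpointwise x
    _ = #(robustOutNbhd G ν S) * #S + Fintype.card V * (ν * Fintype.card V) := by
        simp [sum_add_distrib]

theorem card_add_le_card_robustOutNbhd_of_outDeg {ν τ ε : ℝ} (hν : 0 ≤ ν) (hτ : 0 < τ)
    (hετ : 2 * ν ≤ ε * τ)
    (hdeg : ∀ y, (1 / 2 + ε) * Fintype.card V ≤ (outDeg G y : ℝ)) (S : Finset V)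
    (hS_ge : τ * Fintype.card V ≤ #S) (hS_le : #S ≤ (1 / 2 + ε / 2 - ν) * Fintype.card V) :
    #S + ν * Fintype.card V ≤ #(robustOutNbhd G ν S) := by
  have hn : (0 : ℝ) ≤ Fintype.card V := Nat.cast_nonneg _
  have hε : 0 ≤ ε := by nlinarith
  obtain hS_empty | hSpos := (Nat.cast_nonneg (α := ℝ) #S).eq_or_lt
  · rw [← hS_empty] at hS_ge ⊢
    nlinarith [(#(robustOutNbhd G ν S)).cast_nonneg (α := ℝ)]
  have hmin : #S * ((1 / 2 + ε) * Fintype.card V) ≤ ∑ y ∈ S, (outDeg G y : ℝ) := by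
    simpa using card_nsmul_le_sum S _ _ fun y _ => hdeg y
  have herror : ν * Fintype.card V * Fintype.card V ≤ ε / 2 * Fintype.card V * #S :=
    calc ν * Fintype.card V * Fintype.card V
        ≤ ε * τ / 2 * Fintype.card V * Fintype.card V := by gcongr; linarith
      _ = ε / 2 * Fintype.card V * (τ * Fintype.card V) := by ring
      _ ≤ ε / 2 * Fintype.card V * #S := by gcongr
  have hsq : (#S : ℝ) * #S ≤ #S * ((1 / 2 + ε / 2 - ν) * Fintype.card V) :=
    mul_le_mul_of_nonneg_left hS_le hSpos.le
  refine le_of_mul_le_mul_left ?_ hSpos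
  linarith [sum_outDeg_le_card_robustOutNbhd G hν S]

theorem card_add_inDeg_le (S : Finset V) (x : V) :
    #S + inDeg G x ≤ #{y ∈ S | G y x} + Fintype.card V := by
  have hunion : #(S ∪ ({y | G y x} : Finset V)) ≤ Fintype.card V := card_le_univ _
  have hinter := card_union_add_card_inter S ({y | G y x} : Finset V)
  rw [inter_filter, inter_univ] at hinter
  unfold inDeg
  omega

theorem robustOutNbhd_eq_univ_of_inDeg {ν d : ℝ} (hdeg : ∀ x, d ≤ (inDeg G x : ℝ))
    (S : Finset V) (hS : ν * Fintype.card V + Fintype.card V ≤ #S + d) :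
    robustOutNbhd G ν S = univ := by
  refine filter_true_of_mem fun x _ => ?_
  have : (#S + inDeg G x : ℝ) ≤ #{y ∈ S | G y x} + Fintype.card V :=
    mod_cast card_add_inDeg_le G S x
  linarith [hdeg x]

end

theorem stmt0_general {V : Type*} [Fintype V] (G : V → V → Prop) (ν τ ε : ℝ)
    (hν : 0 < ν) (hντ : ν ≤ τ) (hratio : 2 * ν / τ ≤ ε)
    (hdeg : ∀ x : V, (1 / 2 + ε) * (Fintype.card V : ℝ) ≤ (outDeg G x : ℝ) ∧
      (1 / 2 + ε) * (Fintype.card V : ℝ) ≤ (inDeg G x : ℝ)) :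
    IsRobustOutexpander G ν τ := by
  intro S hS_ge hS_le
  have hτ : 0 < τ := hν.trans_le hντ
  have hετ : 2 * ν ≤ ε * τ := by rwa [div_le_iff₀ hτ] at hratio
  by_cases hsmall : (#S : ℝ) ≤ (1 / 2 + ε / 2 - ν) * Fintype.card V
  · exact card_add_le_card_robustOutNbhd_of_outDeg G hν.le hτ hετ (fun y => (hdeg y).1) S
      hS_ge hsmall
  have hn : (0 : ℝ) < Fintype.card V := by
    refine Nat.cast_pos.mpr (Fintype.card_pos_iff.mpr ?_)
    by_contra! hV
    simp [Finset.eq_empty_of_isEmpty S] at hsmall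
  have hτ_half : τ ≤ 1 / 2 := by nlinarith
  have hε : 0 ≤ ε := by nlinarith
  have hε2ν : 2 * ν ≤ ε := by nlinarith
  rw [robustOutNbhd_eq_univ_of_inDeg G (fun x => (hdeg x).2) S (by nlinarith), card_univ]
  nlinarith

/-- Lemma on regular digraphs being robust outexpanders.
If `G` is a digraph on `n` vertices with minimum semidegree at least `(1/2+ε)n`,
where `0 < ν ≤ τ ≤ ε < 1` and `ε ≥ 2ν/τ`, then `G` is a robust `(ν,τ)`-outexpander. -/
theorem stmt0 {V : Type*} [Fintype V] (G : V → V → Prop) (ν τ ε : ℝ)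
    (hν : 0 < ν) (hντ : ν ≤ τ) (hτε : τ ≤ ε) (hε : ε < 1) (hratio : 2 * ν / τ ≤ ε)
    (hdeg : ∀ x : V, (1 / 2 + ε) * (Fintype.card V : ℝ) ≤ (outDeg G x : ℝ) ∧
      (1 / 2 + ε) * (Fintype.card V : ℝ) ≤ (inDeg G x : ℝ)) :
    IsRobustOutexpander G ν τ :=
  stmt0_general G ν τ ε hν hντ hratio hdeg
end

section
/- Let R be a robust (ν,τ)-outexpander on k vertices with δ⁰(R) ≥ 2τk and ν ≤ τ ≤ 1/3, and let C be a Hamilton cycle in R. Then for any vertices A, B of R and any set V' of vertices with |V'| ≤ νk/4, there is a chord sequence from A to B in R containing at most 3/ν edges whose interior avoids V'. -/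
open Finset
open scoped Classical

/-!
Grow the sets `X i = chordSet R σ A V' i` of vertices `x` reachable from `A` by a chord
sequence with `i` edges whose interior avoids `V'`, and such that `x` and `x⁻` avoid `V'` as
well (so the sequence may be continued from `x`). Removing the at most `2|V'| ≤ νk/2` vertices
`x` with `x ∈ V'` or `x⁻ ∈ V'` costs at most half of the expansion, so
`|X (i+1)| ≥ |X i| + νk/2` as long as `τk ≤ |X i| ≤ (1-τ)k`; and `|X 1| ≥ δ⁰ - νk/2 ≥ τk`.
Hence after at most `2/ν` steps `|X i| > (1-τ)k`, and then `X i` meets the set of the at least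
`2τk` successors of inneighbours of `B`, which gives one more chord into `B`.
-/

theorem exists_gt_and_add_mul_le_of_forall_add_le {f : ℕ → ℝ} {lo hi d K : ℝ} (hd : 0 < d)
    (h0 : lo ≤ f 0) (hstep : ∀ i, lo ≤ f i → f i ≤ hi → f i + d ≤ f (i + 1))
    (hK : ∀ i, f i ≤ K) : ∃ m : ℕ, hi < f m ∧ f 0 + m * d ≤ K := by
  have growth : ∀ n : ℕ, (∀ i < n, f i ≤ hi) → lo ≤ f n ∧ f 0 + n * d ≤ f n := by
    intro n
    induction n with
    | zero => simpa using h0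
    | succ n ih =>
      intro hlt
      obtain ⟨hlo, hsum⟩ := ih fun i hin => hlt i (Nat.lt_succ_of_lt hin)
      have := hstep n hlo (hlt n n.lt_succ_self)
      push_cast
      constructor <;> linarith
  have hex : ∃ m, hi < f m := by
    by_contra! hall
    obtain ⟨n, hn⟩ := exists_nat_gt ((K - f 0) / d)
    have := (growth n fun i _ => hall i).2
    rw [div_lt_iff₀ hd] at hn
    linarith [hK n]
  refine ⟨Nat.find hex, Nat.find_spec hex, ?_⟩
  have := (growth _ fun i hin => not_lt.mp (Nat.find_min hex hin)).2
  linarith [hK (Nat.find hex)]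

section ChordSequences

variable {V : Type*} {R : V → V → Prop} {σ : Equiv.Perm V}

def ChordReach (R : V → V → Prop) (σ : Equiv.Perm V) (A : V) (V' : Finset V)
    (i : ℕ) (x : V) : Prop :=
  ∃ W : ℕ → V, W 0 = A ∧ W i = x ∧ (∀ j < i, R (σ.symm (W j)) (W (j + 1))) ∧
    (∀ j, 0 < j → j < i → W j ∉ V' ∧ σ.symm (W j) ∉ V')

theorem chordReach_zero (A : V) (V' : Finset V) : ChordReach R σ A V' 0 A :=
  ⟨fun _ => A, rfl, rfl, fun _ h => absurd h (Nat.not_lt_zero _), fun _ h h' => by omega⟩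

theorem ChordReach.extend {A x y : V} {V' : Finset V} {i : ℕ} (hx : ChordReach R σ A V' i x)
    (hxV' : 0 < i → x ∉ V' ∧ σ.symm x ∉ V') (hxy : R (σ.symm x) y) :
    ChordReach R σ A V' (i + 1) y := by
  obtain ⟨W, h0, hi, hE, hI⟩ := hx
  refine ⟨fun j => if j ≤ i then W j else y, by simp [h0], by simp, ?_, ?_⟩
  · intro j hj
    rcases (Nat.lt_succ_iff.mp hj).lt_or_eq with h | rfl
    · simpa [h.le, Nat.succ_le_of_lt h] using hE j h
    · simpa [hi] using hxy
  · intro j hj0 hj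
    rcases (Nat.lt_succ_iff.mp hj).lt_or_eq with h | rfl
    · simpa [h.le] using hI j hj0 h
    · simpa [hi] using hxV' hj0

theorem card_le_card_filter_add_two_mul (σ : Equiv.Perm V) (V' T : Finset V) :
    T.card ≤ (T.filter fun y => y ∉ V' ∧ σ.symm y ∉ V').card + 2 * V'.card := by
  have hsub : T ⊆ (T.filter fun y => y ∉ V' ∧ σ.symm y ∉ V') ∪ V' ∪ V'.image σ := by
    intro y hy
    by_cases h1 : y ∈ V'
    · simp [h1]
    by_cases h2 : σ.symm y ∈ V'
    · exact mem_union_right _ (mem_image.mpr ⟨_, h2, σ.apply_symm_apply y⟩)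
    · simp [hy, h1, h2]
  calc T.card ≤ ((T.filter fun y => y ∉ V' ∧ σ.symm y ∉ V') ∪ V' ∪ V'.image σ).card :=
        card_le_card hsub
    _ ≤ (T.filter fun y => y ∉ V' ∧ σ.symm y ∉ V').card + V'.card + (V'.image σ).card :=
        (card_union_le _ _).trans (by gcongr; exact card_union_le _ _)
    _ ≤ _ := by linarith [card_image_le (s := V') (f := σ)]

variable [Fintype V]

noncomputable def chordSet (R : V → V → Prop) (σ : Equiv.Perm V) (A : V) (V' : Finset V)
    (i : ℕ) : Finset V :=
  univ.filter fun x => ChordReach R σ A V' i x ∧ x ∉ V' ∧ σ.symm x ∉ V'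

theorem outDeg_le_card_chordSet_one (A : V) (V' : Finset V) :
    outDeg R (σ.symm A) ≤ (chordSet R σ A V' 1).card + 2 * V'.card := by
  refine (card_le_card_filter_add_two_mul σ V' _).trans (Nat.add_le_add_right (card_le_card ?_) _)
  intro y hy
  simp only [mem_filter, mem_univ, true_and] at hy
  exact mem_filter.mpr
    ⟨mem_univ _, (chordReach_zero A V').extend (fun h => absurd h (lt_irrefl 0)) hy.1, hy.2⟩

theorem card_robustOutNbhd_le_card_chordSet_succ {ν : ℝ} (hν : 0 < ν * Fintype.card V)
    (A : V) (V' : Finset V) (i : ℕ) :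
    (robustOutNbhd R ν ((chordSet R σ A V' i).image σ.symm)).card ≤
      (chordSet R σ A V' (i + 1)).card + 2 * V'.card := by
  refine (card_le_card_filter_add_two_mul σ V' _).trans (Nat.add_le_add_right (card_le_card ?_) _)
  intro y hy
  simp only [robustOutNbhd, mem_filter, mem_univ, true_and] at hy
  obtain ⟨z, hz⟩ : ((((chordSet R σ A V' i).image σ.symm)).filter fun z => R z y).Nonempty := by
    rw [← card_pos]
    exact_mod_cast hν.trans_le hy.1
  simp only [mem_filter, mem_image, chordSet, mem_univ, true_and] at hz
  obtain ⟨⟨x, ⟨hreach, hxV'⟩, rfl⟩, hxy⟩ := hz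
  exact mem_filter.mpr ⟨mem_univ _, hreach.extend (fun _ => hxV') hxy, hy.2⟩

theorem card_chordSet_add_le_card_chordSet_succ {ν τ : ℝ} (hR : IsRobustOutexpander R ν τ)
    (hν : 0 < ν * Fintype.card V) (A : V) (V' : Finset V) (i : ℕ)
    (hlo : τ * Fintype.card V ≤ (chordSet R σ A V' i).card)
    (hhi : ((chordSet R σ A V' i).card : ℝ) ≤ (1 - τ) * Fintype.card V) :
    ((chordSet R σ A V' i).card : ℝ) + ν * Fintype.card V ≤
      (chordSet R σ A V' (i + 1)).card + 2 * V'.card := by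
  have hcard : (((chordSet R σ A V' i).image σ.symm).card : ℝ) = (chordSet R σ A V' i).card := by
    rw [card_image_of_injective _ σ.symm.injective]
  have hexp := hR _ (hcard ▸ hlo) (hcard ▸ hhi)
  have hsub : ((robustOutNbhd R ν ((chordSet R σ A V' i).image σ.symm)).card : ℝ) ≤
      (chordSet R σ A V' (i + 1)).card + 2 * V'.card := by
    exact_mod_cast card_robustOutNbhd_le_card_chordSet_succ hν A V' i
  linarith

theorem chordReach_of_card_lt {A B : V} {V' : Finset V} {i : ℕ}
    (hcard : Fintype.card V < (chordSet R σ A V' i).card + inDeg R B) :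
    ChordReach R σ A V' (i + 1) B := by
  have hinDeg : inDeg R B = ((univ.filter fun x => R x B).image σ).card :=
    (card_image_of_injective _ σ.injective).symm
  rw [hinDeg] at hcard
  obtain ⟨x, hx⟩ := inter_nonempty_of_card_lt_card_add_card (subset_univ _) (subset_univ _) hcard
  simp only [mem_inter, chordSet, mem_filter, mem_image, mem_univ, true_and] at hx
  obtain ⟨⟨hreach, hxV'⟩, z, hzB, rfl⟩ := hx
  exact hreach.extend (fun _ => hxV') (by simpa using hzB)

end ChordSequences

theorem stmt4_general {V : Type*} [Fintype V] (R : V → V → Prop) (ν τ : ℝ)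
    (hν : 0 < ν) (hντ : ν ≤ τ) (hτ : τ ≤ 1 / 3)
    (hR : IsRobustOutexpander R ν τ)
    (hdeg : ∀ x : V, 2 * τ * (Fintype.card V : ℝ) ≤ (outDeg R x : ℝ) ∧
      2 * τ * (Fintype.card V : ℝ) ≤ (inDeg R x : ℝ))
    (σ : Equiv.Perm V)
    (A B : V) (V' : Finset V) (hV' : (V'.card : ℝ) ≤ ν * (Fintype.card V : ℝ) / 4) :
    ∃ (t : ℕ) (W : ℕ → V), W 0 = A ∧ W t = B ∧
      (∀ i < t, R (σ.symm (W i)) (W (i + 1))) ∧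
      (t : ℝ) ≤ 3 / ν ∧
      (∀ i, 0 < i → i < t → W i ∉ V' ∧ σ.symm (W i) ∉ V') := by
  set k : ℝ := (Fintype.card V : ℝ)
  have hk : 0 < k := by have : Nonempty V := ⟨A⟩; exact Nat.cast_pos.mpr Fintype.card_pos
  have hνk : ν * k ≤ τ * k := mul_le_mul_of_nonneg_right hντ hk.le
  set X := chordSet R σ A V'
  have hbase : τ * k ≤ (X 1).card := by
    have : (outDeg R (σ.symm A) : ℝ) ≤ (X 1).card + 2 * V'.card := by
      exact_mod_cast outDeg_le_card_chordSet_one A V'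
    linarith [(hdeg (σ.symm A)).1]
  have hgrowth (i : ℕ) (hlo : τ * k ≤ (X i).card) (hhi : ((X i).card : ℝ) ≤ (1 - τ) * k) :
      ((X i).card : ℝ) + ν * k / 2 ≤ (X (i + 1)).card := by
    linarith [card_chordSet_add_le_card_chordSet_succ hR (by positivity) A V' i hlo hhi]
  obtain ⟨m, hbig, hm⟩ := exists_gt_and_add_mul_le_of_forall_add_le
    (f := fun i => ((X (i + 1)).card : ℝ)) (K := k) (by positivity) hbase
    (fun i => hgrowth (i + 1)) (fun i => by simp only [k]; exact_mod_cast card_le_univ _)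
  obtain ⟨W, h0, hB, hE, hI⟩ : ChordReach R σ A V' (m + 1 + 1) B := by
    refine chordReach_of_card_lt ?_
    have : k < (X (m + 1)).card + inDeg R B := by linarith [(hdeg B).2]
    simp only [k] at this
    exact_mod_cast this
  refine ⟨m + 1 + 1, W, h0, hB, hE, ?_, hI⟩
  have hm' : (m : ℝ) ≤ 2 / ν := by
    rw [le_div_iff₀ hν]
    nlinarith [(X 1).card.cast_nonneg (α := ℝ)]
  have htwo : 2 ≤ 1 / ν := by rw [le_div_iff₀ hν]; linarith
  calc ((m + 1 + 1 : ℕ) : ℝ) = m + 2 := by push_cast; ring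
    _ ≤ 2 / ν + 1 / ν := add_le_add hm' htwo
    _ = 3 / ν := by ring

/-- Lemma: chord sequences avoiding a small set.
`R` is a robust `(ν,τ)`-outexpander on `k` vertices with `δ⁰(R) ≥ 2τk` and `ν ≤ τ ≤ 1/3`.
A Hamilton cycle `C` of `R` is encoded by its successor permutation `σ`: a single cycle all
of whose edges `x → σ x` lie in `R`. A chord sequence from `A` to `B` is encoded by a
sequence `W 0 = A, W 1, …, W t = B` whose chord edges are `σ⁻¹(W i) → W (i+1) ∈ E(R)`;
its interior consists of the vertices `W i` and `σ⁻¹(W i)` for `0 < i < t`.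
Given any `A`, `B` and a set `V'` with `|V'| ≤ νk/4`, there is such a chord sequence with
at most `3/ν` edges whose interior avoids `V'`. -/
theorem stmt4 {V : Type*} [Fintype V] (R : V → V → Prop) (ν τ : ℝ)
    (hν : 0 < ν) (hντ : ν ≤ τ) (hτ : τ ≤ 1 / 3)
    (hR : IsRobustOutexpander R ν τ)
    (hdeg : ∀ x : V, 2 * τ * (Fintype.card V : ℝ) ≤ (outDeg R x : ℝ) ∧
      2 * τ * (Fintype.card V : ℝ) ≤ (inDeg R x : ℝ))
    (σ : Equiv.Perm V) (hham : ∀ x, R x (σ x)) (hcyc : ∀ x y, σ.SameCycle x y)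
    (A B : V) (V' : Finset V) (hV' : (V'.card : ℝ) ≤ ν * (Fintype.card V : ℝ) / 4) :
    ∃ (t : ℕ) (W : ℕ → V), W 0 = A ∧ W t = B ∧
      (∀ i < t, R (σ.symm (W i)) (W (i + 1))) ∧
      (t : ℝ) ≤ 3 / ν ∧
      (∀ i, 0 < i → i < t → W i ∉ V' ∧ σ.symm (W i) ∉ V') :=
  stmt4_general R ν τ hν hντ hτ hR hdeg σ A B V' hV'
end

section
/- Suppose 0 < 1/m ≪ ε ≤ d' ≤ d ≪ 1. Let G be a bipartite graph with vertex classes A and B each of size m, and let G' be obtained from G by removing at most d'm vertices from each class and at most d'm edges incident to each remaining vertex. If G is ε-regular of density at least d, then G' is 2√(d')-regular of density at least d − 2√(d'). -/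
/-!
Write `s = √d'`. Removing at most `d'm` edges at every vertex of `X` changes the density of `(X, Y)`
by at most `d'm / |Y|`, which is at most `s` once `|Y| ≥ s m`. The pairs tested by
`2s`-regularity of `(A', B')` have `|X|, |Y| ≥ 2s (1 - d') m ≥ s m ≥ ε m`, so ε-regularity of `G`
pins their `G`-density to within `ε` of the density `D` of `G`. Hence every such pair, `(A', B')`
included, has `G'`-density in `(D - ε - s, D + ε)`, and `2ε + s < 2s` because `ε ≤ d' = s² ≤ s/4`.
-/

open Finset
open scoped Classical

/-- Number of edges of a bipartite graph `G` between `X` and `Y`. -/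
noncomputable def eCnt {A B : Type*} [Fintype A] [Fintype B] (G : A → B → Prop)
    (X : Finset A) (Y : Finset B) : ℕ :=
  ((X ×ˢ Y).filter (fun p => G p.1 p.2)).card

/-- Density of the bipartite graph `G` between `X` and `Y`. -/
noncomputable def dens {A B : Type*} [Fintype A] [Fintype B] (G : A → B → Prop)
    (X : Finset A) (Y : Finset B) : ℝ :=
  (eCnt G X Y : ℝ) / ((X.card : ℝ) * (Y.card : ℝ))

/-- `G` restricted to the pair `(A', B')` is ε-regular. -/
def EpsRegularOn {A B : Type*} [Fintype A] [Fintype B] (G : A → B → Prop)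
    (A' : Finset A) (B' : Finset B) (ε : ℝ) : Prop :=
  ∀ X : Finset A, X ⊆ A' → ∀ Y : Finset B, Y ⊆ B' →
    ε * (A'.card : ℝ) ≤ (X.card : ℝ) → ε * (B'.card : ℝ) ≤ (Y.card : ℝ) →
    |dens G X Y - dens G A' B'| < ε

section Perturbation

variable {A B : Type*} [Fintype A] [Fintype B] {G G' : A → B → Prop}

lemma eCnt_eq_sum_card_filter (G : A → B → Prop) (X : Finset A) (Y : Finset B) :
    eCnt G X Y = ∑ a ∈ X, (Y.filter (G a)).card := by
  simp only [eCnt, card_filter, sum_product]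

lemma dens_le_dens_of_le (hGG' : ∀ a b, G' a b → G a b) (X : Finset A) (Y : Finset B) :
    dens G' X Y ≤ dens G X Y := by
  unfold _root_.dens
  gcongr
  exact card_le_card (monotone_filter_right _ fun p _ hp => hGG' _ _ hp)

lemma eCnt_le_eCnt_add_mul {X : Finset A} {Y Y' : Finset B} {k : ℝ} (hY : Y ⊆ Y')
    (hdel : ∀ a ∈ X, ((Y'.filter fun b => G a b ∧ ¬ G' a b).card : ℝ) ≤ k) :
    (eCnt G X Y : ℝ) ≤ eCnt G' X Y + X.card * k := by
  have hsplit : ∀ a ∈ X, ((Y.filter (G a)).card : ℝ) ≤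
      (Y.filter (G' a)).card + (Y'.filter fun b => G a b ∧ ¬ G' a b).card := by
    intro a _
    have hsub : Y.filter (G a) ⊆ Y.filter (G' a) ∪ Y'.filter fun b => G a b ∧ ¬ G' a b := by
      intro b hb
      simp only [mem_filter, mem_union] at hb ⊢
      by_cases hb' : G' a b
      · exact Or.inl ⟨hb.1, hb'⟩
      · exact Or.inr ⟨hY hb.1, hb.2, hb'⟩
    exact_mod_cast (card_le_card hsub).trans (card_union_le _ _)
  calc (eCnt G X Y : ℝ) = ∑ a ∈ X, ((Y.filter (G a)).card : ℝ) := by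
        rw [eCnt_eq_sum_card_filter]; push_cast; rfl
    _ ≤ ∑ a ∈ X, (((Y.filter (G' a)).card : ℝ) + k) :=
        sum_le_sum fun a ha => (hsplit a ha).trans (by linarith [hdel a ha])
    _ = eCnt G' X Y + X.card * k := by
        rw [sum_add_distrib, eCnt_eq_sum_card_filter, sum_const, nsmul_eq_mul]; push_cast; rfl

lemma dens_sub_div_le_dens {X : Finset A} {Y Y' : Finset B} {k : ℝ} (hY : Y ⊆ Y')
    (hX : X.Nonempty)
    (hdel : ∀ a ∈ X, ((Y'.filter fun b => G a b ∧ ¬ G' a b).card : ℝ) ≤ k) :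
    dens G X Y - k / Y.card ≤ dens G' X Y := by
  have hX0 : (X.card : ℝ) ≠ 0 := by exact_mod_cast hX.card_pos.ne'
  have hk : k / Y.card = X.card * k / (X.card * Y.card) := by
    rw [mul_div_mul_left _ _ hX0]
  rw [hk, _root_.dens, _root_.dens, div_sub_div_same]
  gcongr
  linarith [eCnt_le_eCnt_add_mul hY hdel]

lemma dens_mem_Ioo_of_epsRegularOn_univ (hGG' : ∀ a b, G' a b → G a b) {ε k : ℝ}
    (hreg : EpsRegularOn G univ univ ε) {X : Finset A} {Y Y' : Finset B} (hY : Y ⊆ Y')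
    (hX : X.Nonempty) (hXε : ε * Fintype.card A ≤ X.card) (hYε : ε * Fintype.card B ≤ Y.card)
    (hdel : ∀ a ∈ X, ((Y'.filter fun b => G a b ∧ ¬ G' a b).card : ℝ) ≤ k) :
    dens G' X Y ∈ Set.Ioo (dens G univ univ - ε - k / Y.card) (dens G univ univ + ε) := by
  have hclose := abs_sub_lt_iff.mp <|
    hreg X (subset_univ X) Y (subset_univ Y) (by rwa [card_univ]) (by rwa [card_univ])
  have hlower := dens_sub_div_le_dens hY hX hdel
  have hupper := dens_le_dens_of_le hGG' X Y
  constructor <;> linarith [hclose.1, hclose.2]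

end Perturbation

lemma sqrt_mul_le_of_two_sqrt_mul_le {d' m a x : ℝ} (hd' : d' ≤ 1 / 2)
    (hm : 0 ≤ m) (ha : m - d' * m ≤ a) (hx : 2 * √d' * a ≤ x) : √d' * m ≤ x := by
  have hs := Real.sqrt_nonneg d'
  nlinarith [mul_le_mul_of_nonneg_left ha (by positivity : (0:ℝ) ≤ 2 * √d'),
    mul_nonneg hs (mul_nonneg (by linarith : 0 ≤ 1 / 2 - d') hm)]

/-- robustness of ε-regularity under small perturbations.
There is `d₀ > 0` such that: whenever `0 < ε ≤ d' ≤ d ≤ d₀` there is `m₀` such that for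
all `m ≥ m₀` the following holds. Let `G` be a bipartite graph with vertex classes of size
`m` (both `Fin m`), which is ε-regular of density at least `d`. Let `G'` be obtained from
`G` by removing at most `d'm` vertices from each class (leaving classes `A'`, `B'`) and at
most `d'm` edges incident to each remaining vertex. Then `G'` (on `A', B'`) is
`2√d'`-regular of density at least `d − 2√d'`. -/
theorem stmt6 : ∃ d₀ : ℝ, 0 < d₀ ∧ ∀ ε d' d : ℝ, 0 < ε → ε ≤ d' → d' ≤ d → d ≤ d₀ →
    ∃ m₀ : ℕ, ∀ m : ℕ, m₀ ≤ m →
    ∀ (G G' : Fin m → Fin m → Prop) (A' B' : Finset (Fin m)),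
      (∀ a b, G' a b → G a b) →
      (m : ℝ) - d' * (m : ℝ) ≤ (A'.card : ℝ) →
      (m : ℝ) - d' * (m : ℝ) ≤ (B'.card : ℝ) →
      (∀ a ∈ A', ((B'.filter (fun b => G a b ∧ ¬ G' a b)).card : ℝ) ≤ d' * (m : ℝ)) →
      (∀ b ∈ B', ((A'.filter (fun a => G a b ∧ ¬ G' a b)).card : ℝ) ≤ d' * (m : ℝ)) →
      EpsRegularOn G Finset.univ Finset.univ ε →
      d ≤ dens G Finset.univ Finset.univ →
      EpsRegularOn G' A' B' (2 * Real.sqrt d') ∧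
        d - 2 * Real.sqrt d' ≤ dens G' A' B' := by
  refine ⟨1 / 16, by norm_num, fun ε d' d hε hεd' hd'd hd => ⟨1, fun m hm G G' A' B' hGG' hA' hB'
    hdelA _ hreg hdens => ?_⟩⟩
  have hd' : 0 < d' := hε.trans_le hεd'
  have hs : 0 < √d' := Real.sqrt_pos.mpr hd'
  have hss : √d' * √d' = d' := Real.mul_self_sqrt hd'.le
  have hs4 : √d' ≤ 1 / 4 := by
    rw [Real.sqrt_le_left (by norm_num)]; linarith
  have hm0 : (0 : ℝ) < m := by exact_mod_cast hm
  have hpair : ∀ X ⊆ A', ∀ Y ⊆ B', 2 * √d' * A'.card ≤ X.card → 2 * √d' * B'.card ≤ Y.card →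
      dens G' X Y ∈ Set.Ioo (dens G univ univ - ε - √d') (dens G univ univ + ε) := by
    intro X hXA Y hYB hXc hYc
    have hXm := sqrt_mul_le_of_two_sqrt_mul_le (by linarith) hm0.le hA' hXc
    have hYm := sqrt_mul_le_of_two_sqrt_mul_le (by linarith) hm0.le hB' hYc
    have hεm : ε * m ≤ √d' * m := by gcongr; nlinarith
    have hYpos : (0 : ℝ) < Y.card := (mul_pos hs hm0).trans_le hYm
    have hX : X.Nonempty := card_pos.mp (by exact_mod_cast (mul_pos hs hm0).trans_le hXm)
    have hk : d' * m / Y.card ≤ √d' := by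
      rw [div_le_iff₀ hYpos]; nlinarith [mul_le_mul_of_nonneg_left hYm hs.le]
    obtain ⟨hlo, hhi⟩ := dens_mem_Ioo_of_epsRegularOn_univ hGG' hreg hYB hX
      (by simpa using hεm.trans hXm) (by simpa using hεm.trans hYm) fun a ha => hdelA a (hXA ha)
    exact ⟨by linarith, hhi⟩
  have hwhole := hpair A' subset_rfl B' subset_rfl (by nlinarith) (by nlinarith)
  have hεs : ε ≤ √d' / 4 := by nlinarith
  refine ⟨fun X hXA Y hYB hXc hYc => ?_, by linarith [hwhole.1]⟩
  have hXY := hpair X hXA Y hYB hXc hYc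
  rw [abs_sub_lt_iff]
  constructor <;> linarith [hXY.1, hXY.2, hwhole.1, hwhole.2]
end

section
/- Let G be an oriented graph on n vertices (no 2-cycles) with δ⁺(G) + δ⁻(G) + δ(G) ≥ 3n/2 + εn, where 0 < 1/n ≪ ν ≪ τ ≤ ε/2 ≤ 1. Then G is a robust (ν,τ)-outexpander. In particular, every r-regular oriented graph with r ≥ 3n/8 + εn is a robust (ν,τ)-outexpander. -/
open Finset
open scoped Classical

/-!
Suppose `|S| + νn > |R|` for `R = RN⁺_ν(S)` and split the vertex set into `T = S \ R`,
`K = S ∩ R`, `W = R \ S` and `U = (S ∪ R)ᶜ`. Every vertex outside `R` receives fewer than `νn`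
edges from `S`, and since `G` is oriented a set `X` spans at most `|X|²/2` edges. Counting the edges
leaving `K`, `S` or `R` bounds `δ⁺`, counting those entering `U` or a single vertex outside `R`
bounds `δ⁻`, and a vertex of `T` with few neighbours inside `T` bounds `δ` (and `δ⁺ + δ⁻`) by about
`n - |T|`. In each of the cases `U = ∅` with `|T| ≥ n/4` or `|T| < n/4`, and `U ≠ ∅` with `|K|`
large or small, three of these bounds add up to less than `3n/2 + εn`.
-/

namespace Rel

variable {α β : Type*} (r : α → β → Prop) [∀ a, DecidablePred (r a)]

theorem card_interedges_eq_sum_left (s : Finset α) (t : Finset β) :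
    #(interedges r s t) = ∑ a ∈ s, #{b ∈ t | r a b} := by
  simp only [interedges, card_filter, sum_product]

theorem card_interedges_eq_sum_right (s : Finset α) (t : Finset β) :
    #(interedges r s t) = ∑ b ∈ t, #{a ∈ s | r a b} := by
  simp only [interedges, card_filter, sum_product_right]

theorem card_interedges_le_add_left [DecidableEq α] {s s₁ s₂ : Finset α} (hs : s ⊆ s₁ ∪ s₂)
    (t : Finset β) :
    #(interedges r s t) ≤ #(interedges r s₁ t) + #(interedges r s₂ t) := by
  refine (card_le_card fun e he ↦ ?_).trans (card_union_le _ _)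
  simp only [mem_union, mem_interedges_iff] at he ⊢
  rcases mem_union.1 (hs he.1) with h | h <;> simp [h, he.2]

theorem card_interedges_le_add_right [DecidableEq β] (s : Finset α) {t t₁ t₂ : Finset β}
    (ht : t ⊆ t₁ ∪ t₂) :
    #(interedges r s t) ≤ #(interedges r s t₁) + #(interedges r s t₂) := by
  refine (card_le_card fun e he ↦ ?_).trans (card_union_le _ _)
  simp only [mem_union, mem_interedges_iff] at he ⊢
  rcases mem_union.1 (ht he.2.1) with h | h <;> simp [h, he.1, he.2.2]

theorem two_mul_card_interedges_self_le {r : α → α → Prop} [∀ a, DecidablePred (r a)]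
    (hr : ∀ a b, ¬ (r a b ∧ r b a)) (s : Finset α) :
    2 * #(interedges r s s) ≤ #s * #s := by
  have hswap : #(interedges r s s) ≤ #(interedges (fun a b ↦ ¬ r a b) s s) :=
    card_le_card_of_injOn Prod.swap
      (fun e he ↦ by
        simp only [mem_coe, mem_interedges_iff, Prod.fst_swap, Prod.snd_swap] at he ⊢
        exact ⟨he.2.1, he.1, fun h ↦ hr _ _ ⟨he.2.2, h⟩⟩)
      Prod.swap_injective.injOn
  have := card_interedges_add_card_interedges_compl r s s
  omega

theorem card_interedges_le_card_mul {𝕜 : Type*} [Semiring 𝕜] [PartialOrder 𝕜] [IsOrderedRing 𝕜]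
    {s : Finset α} {t : Finset β} {m : 𝕜} (ht : ∀ b ∈ t, (#{a ∈ s | r a b} : 𝕜) ≤ m) :
    (#(interedges r s t) : 𝕜) ≤ #t * m := by
  rw [card_interedges_eq_sum_right, Nat.cast_sum, ← nsmul_eq_mul]
  exact sum_le_card_nsmul _ _ _ ht

end Rel

namespace Finset

theorem card_compl_eq_card_sdiff_add_card_compl_union {α : Type*} [Fintype α] [DecidableEq α]
    (s t : Finset α) : #tᶜ = #(s \ t) + #(s ∪ t)ᶜ := by
  rw [← card_union_of_disjoint
    (disjoint_compl_right.mono sdiff_subset (compl_subset_compl.2 subset_union_left))]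
  congr 1
  ext x
  by_cases hs : x ∈ s <;> simp [hs]

end Finset

section Digraph

variable {V : Type*} [Fintype V] {G : V → V → Prop}

theorem sum_outDeg (X : Finset V) : ∑ x ∈ X, outDeg G x = #(Rel.interedges G X univ) := by
  rw [Rel.card_interedges_eq_sum_left]; rfl

theorem sum_inDeg (Y : Finset V) : ∑ y ∈ Y, inDeg G y = #(Rel.interedges G univ Y) := by
  rw [Rel.card_interedges_eq_sum_right]; rfl

theorem card_mul_le_card_interedges_of_le_outDeg {a : ℝ} (ha : ∀ x, a ≤ outDeg G x)
    (X : Finset V) : #X * a ≤ #(Rel.interedges G X univ) := by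
  rw [← sum_outDeg, ← nsmul_eq_mul, Nat.cast_sum]
  exact card_nsmul_le_sum _ _ _ fun x _ ↦ ha x

theorem card_mul_le_card_interedges_of_le_inDeg {b : ℝ} (hb : ∀ x, b ≤ inDeg G x)
    (Y : Finset V) : #Y * b ≤ #(Rel.interedges G univ Y) := by
  rw [← sum_inDeg, ← nsmul_eq_mul, Nat.cast_sum]
  exact card_nsmul_le_sum _ _ _ fun x _ ↦ hb x

theorem outDeg_add_inDeg_add_card_le (hG : ∀ x y, ¬ (G x y ∧ G y x)) (x : V) (T : Finset V) :
    outDeg G x + inDeg G x + #T ≤ Fintype.card V + #{y ∈ T | G x y} + #{y ∈ T | G y x} := by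
  set A : Finset V := {y | G x y}
  set B : Finset V := {y | G y x}
  have hdisj : Disjoint A B := disjoint_filter.2 fun y _ hxy hyx ↦ hG x y ⟨hxy, hyx⟩
  have hsub : A ∪ B ⊆ {y ∈ T | G x y} ∪ {y ∈ T | G y x} ∪ Tᶜ := by
    intro y hy
    by_cases hyT : y ∈ T <;> simp_all [A, B]
  calc outDeg G x + inDeg G x + #T = #(A ∪ B) + #T := by
        rw [card_union_of_disjoint hdisj]; rfl
    _ ≤ #({y ∈ T | G x y} ∪ {y ∈ T | G y x}) + #Tᶜ + #T := by
        gcongr; exact (card_le_card hsub).trans (card_union_le _ _)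
    _ ≤ Fintype.card V + #{y ∈ T | G x y} + #{y ∈ T | G y x} := by
        have := card_union_le {y ∈ T | G x y} {y ∈ T | G y x}
        rw [card_compl]
        have := card_le_univ T
        omega

theorem inDeg_le_card_filter_add_card_compl (x : V) (S : Finset V) :
    inDeg G x ≤ #{y ∈ S | G y x} + #Sᶜ := by
  refine (card_le_card fun y hy ↦ ?_).trans (card_union_le _ _)
  by_cases hyS : y ∈ S <;> simp_all

end Digraph

-- Below, `R` plays the role of the robust outneighbourhood `RN⁺_ν(S)` and `m` that of `νn`.
theorem card_interedges_le_of_subset_of_disjoint {V : Type*} {G : V → V → Prop}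
    {S R X Y : Finset V} {m : ℝ} (hR : ∀ x ∉ R, (#{y ∈ S | G y x} : ℝ) ≤ m) (hX : X ⊆ S)
    (hY : Disjoint Y R) :
    (#(Rel.interedges G X Y) : ℝ) ≤ #Y * m :=
  Rel.card_interedges_le_card_mul G fun y hy ↦
    le_trans (by exact_mod_cast card_le_card (filter_subset_filter _ hX))
      (hR y (disjoint_left.1 hY hy))

section SparseComplement

variable {V : Type*} [Fintype V] {G : V → V → Prop} {S R : Finset V} {m a b : ℝ}

theorem card_source_mul_le_of_le_outDeg (hR : ∀ x ∉ R, (#{y ∈ S | G y x} : ℝ) ≤ m)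
    (ha : ∀ x, a ≤ outDeg G x) :
    #S * a ≤ #S * #R + #Rᶜ * m := by
  have hsplit := Rel.card_interedges_le_add_right G S (union_compl R).ge
  have hSR := Rel.card_interedges_le_mul G S R
  rify at hsplit hSR
  linarith [card_mul_le_card_interedges_of_le_outDeg ha S,
    card_interedges_le_of_subset_of_disjoint hR subset_rfl disjoint_compl_left]

theorem card_source_inter_mul_le_of_le_outDeg (hG : ∀ x y, ¬ (G x y ∧ G y x))
    (hR : ∀ x ∉ R, (#{y ∈ S | G y x} : ℝ) ≤ m) (ha : ∀ x, a ≤ outDeg G x) :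
    #(S ∩ R) * a ≤ #(S ∩ R) * #(S ∩ R) / 2 + #(S ∩ R) * #(R \ S) + #Rᶜ * m := by
  have hcover : (univ : Finset V) ⊆ (S ∩ R ∪ R \ S) ∪ Rᶜ := fun y _ ↦ by
    by_cases hyS : y ∈ S <;> by_cases hyR : y ∈ R <;> simp [hyS, hyR]
  have hsplit₁ := Rel.card_interedges_le_add_right G (S ∩ R) hcover
  have hsplit₂ := Rel.card_interedges_le_add_right G (S ∩ R) (subset_refl (S ∩ R ∪ R \ S))
  have hself := Rel.two_mul_card_interedges_self_le hG (S ∩ R)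
  have hcross := Rel.card_interedges_le_mul G (S ∩ R) (R \ S)
  rify at hsplit₁ hsplit₂ hself hcross
  linarith [card_mul_le_card_interedges_of_le_outDeg ha (S ∩ R),
    card_interedges_le_of_subset_of_disjoint hR (inter_subset_left : S ∩ R ⊆ S) disjoint_compl_left]

theorem card_target_mul_le_of_le_outDeg (hG : ∀ x y, ¬ (G x y ∧ G y x))
    (hR : ∀ x ∉ R, (#{y ∈ S | G y x} : ℝ) ≤ m) (ha : ∀ x, a ≤ outDeg G x) :
    #R * a ≤ #R * #R / 2 + #Rᶜ * (#(R \ S) + m) := by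
  have hcover : R ⊆ S ∩ R ∪ R \ S := fun y hy ↦ by by_cases hyS : y ∈ S <;> simp [hyS, hy]
  have hsplit₁ := Rel.card_interedges_le_add_right G R (union_compl R).ge
  have hsplit₂ := Rel.card_interedges_le_add_left G hcover Rᶜ
  have hself := Rel.two_mul_card_interedges_self_le hG R
  have hcross := Rel.card_interedges_le_mul G (R \ S) Rᶜ
  rify at hsplit₁ hsplit₂ hself hcross
  linarith [card_mul_le_card_interedges_of_le_outDeg ha R,
    card_interedges_le_of_subset_of_disjoint hR (inter_subset_left : S ∩ R ⊆ S) disjoint_compl_left]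

theorem card_compl_union_mul_le_of_le_inDeg (hG : ∀ x y, ¬ (G x y ∧ G y x))
    (hR : ∀ x ∉ R, (#{y ∈ S | G y x} : ℝ) ≤ m) (hb : ∀ x, b ≤ inDeg G x) :
    #(S ∪ R)ᶜ * b ≤ #(S ∪ R)ᶜ * (#(R \ S) + #(S ∪ R)ᶜ / 2 + m) := by
  have hcover : (univ : Finset V) ⊆ (S ∪ R \ S) ∪ (S ∪ R)ᶜ := fun y _ ↦ by
    by_cases hyS : y ∈ S <;> by_cases hyR : y ∈ R <;> simp [hyS, hyR]
  have hsplit₁ := Rel.card_interedges_le_add_left G hcover (S ∪ R)ᶜ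
  have hsplit₂ := Rel.card_interedges_le_add_left G (subset_refl (S ∪ R \ S)) (S ∪ R)ᶜ
  have hself := Rel.two_mul_card_interedges_self_le hG (S ∪ R)ᶜ
  have hcross := Rel.card_interedges_le_mul G (R \ S) (S ∪ R)ᶜ
  rify at hsplit₁ hsplit₂ hself hcross
  have hdisj : Disjoint (S ∪ R)ᶜ R := disjoint_compl_left.mono_right subset_union_right
  linarith [card_mul_le_card_interedges_of_le_inDeg hb (S ∪ R)ᶜ,
    card_interedges_le_of_subset_of_disjoint hR subset_rfl hdisj]

theorem le_card_compl_add_of_le_inDeg (hR : ∀ x ∉ R, (#{y ∈ S | G y x} : ℝ) ≤ m)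
    (hb : ∀ x, b ≤ inDeg G x) {x : V} (hx : x ∉ R) :
    b ≤ #Sᶜ + m := by
  have hx' := inDeg_le_card_filter_add_card_compl (G := G) x S
  rify at hx'
  linarith [hb x, hR x hx]

theorem exists_outDeg_add_inDeg_add_card_sdiff_le [Nonempty V] (hG : ∀ x y, ¬ (G x y ∧ G y x))
    (hR : ∀ x ∉ R, (#{y ∈ S | G y x} : ℝ) ≤ m) (hm : 0 ≤ m) :
    ∃ x, (outDeg G x + inDeg G x + #(S \ R) : ℝ) ≤ Fintype.card V + 2 * m := by
  suffices ∃ x, (#{y ∈ S \ R | G x y} : ℝ) ≤ m ∧ (#{y ∈ S \ R | G y x} : ℝ) ≤ m by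
    obtain ⟨x, hout, hin⟩ := this
    have hx := outDeg_add_inDeg_add_card_le hG x (S \ R)
    rify at hx
    exact ⟨x, by linarith⟩
  rcases (S \ R).eq_empty_or_nonempty with hT | hT
  · simp [hT, hm]
  have havg : ∑ x ∈ S \ R, (#{y ∈ S \ R | G x y} : ℝ) ≤ ∑ _x ∈ S \ R, m := by
    rw [← Nat.cast_sum, ← Rel.card_interedges_eq_sum_left, sum_const, nsmul_eq_mul]
    exact card_interedges_le_of_subset_of_disjoint hR sdiff_subset sdiff_disjoint
  obtain ⟨x, hxT, hx⟩ := exists_le_of_sum_le hT havg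
  refine ⟨x, hx, le_trans ?_ (hR x (mem_sdiff.1 hxT).2)⟩
  exact_mod_cast card_le_card (filter_subset_filter _ sdiff_subset)

end SparseComplement

-- `t, k, w, u` are the sizes of `S \ R, S ∩ R, R \ S, (S ∪ R)ᶜ`, and `d` is the degree of the vertex
-- given by `exists_outDeg_add_inDeg_add_card_sdiff_le`.
theorem degree_sum_lt_of_bounds {n t k w u a b c d ε τ ν : ℝ}
    (hk : 0 ≤ k) (hw : 0 ≤ w) (hu : 0 ≤ u) (hn : t + k + w + u = n)
    (hε : 0 < ε) (hε2 : ε ≤ 2) (hτ : 0 < τ) (hν : 0 < ν)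
    (hνε : ν ≤ ε ^ 2 * τ / 100) (hs : τ * n ≤ t + k) (hwt : w < t + ν * n)
    (hK : k * a ≤ k * k / 2 + k * w + (t + u) * (ν * n))
    (hS : (t + k) * a ≤ (t + k) * (k + w) + (t + u) * (ν * n))
    (hR : (k + w) * a ≤ (k + w) * (k + w) / 2 + (t + u) * (w + ν * n))
    (hU : u * b ≤ u * (w + u / 2 + ν * n))
    (hb : b ≤ w + u + ν * n)
    (hcd : c ≤ d) (habd : a + b ≤ d) (hd : d + t ≤ n + 2 * (ν * n)) :
    a + b + c < 3 * n / 2 + ε * n := by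
  have hn0 : 0 < n := by nlinarith
  have hνn : 0 < ν * n := mul_pos hν hn0
  have hν_sq : ν ≤ ε ^ 2 / 100 := hνε.trans (by nlinarith)
  have hν_τ : ν ≤ ε * τ / 50 := hνε.trans (by nlinarith)
  have hν_ε : ν ≤ ε / 50 := hν_τ.trans (by nlinarith)
  have hνn_ε : ν * n ≤ ε * n / 50 := by nlinarith
  have htu : (t + u) * (ν * n) ≤ ν * (n * n) := by nlinarith
  rcases hu.eq_or_lt with rfl | hu0
  · by_cases hI : n / 4 ≤ t
    · linarith
    · have ha : a ≤ (k + w) / 2 + t / 3 + ν * n := by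
        refine le_of_mul_le_mul_left ?_ (by linarith : 0 < k + w)
        nlinarith
      linarith
  · have hbU : b ≤ w + u / 2 + ν * n := le_of_mul_le_mul_left (by linarith) hu0
    by_cases hII : ε * n / 50 ≤ k
    · have ha : a ≤ k / 2 + w + ε * n / 2 := by
        have hk0 : 0 < k := lt_of_lt_of_le (by positivity) hII
        have : ν * (n * n) ≤ ε * n / 50 * (ε * n / 2) := by
          linear_combination mul_le_mul_of_nonneg_right hν_sq (mul_self_nonneg n)
        refine le_of_mul_le_mul_left ?_ hk0
        linear_combination hK + htu + this +
          mul_le_mul_of_nonneg_right hII (by positivity : 0 ≤ ε * n / 2)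
      linarith
    · have ha : a ≤ k + w + ε * n / 50 := by
        have hs0 : 0 < t + k := lt_of_lt_of_le (by positivity) hs
        have : ν * (n * n) ≤ τ * n * (ε * n / 50) := by
          linear_combination mul_le_mul_of_nonneg_right hν_τ (mul_self_nonneg n)
        refine le_of_mul_le_mul_left ?_ hs0
        linear_combination hS + htu + this +
          mul_le_mul_of_nonneg_right hs (by positivity : 0 ≤ ε * n / 50)
      linarith

theorem card_filter_le_of_notMem_robustOutNbhd {V : Type*} [Fintype V] {G : V → V → Prop}
    {ν : ℝ} {S : Finset V} {x : V} (hx : x ∉ robustOutNbhd G ν S) :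
    (#{y ∈ S | G y x} : ℝ) ≤ ν * Fintype.card V := by
  simp only [robustOutNbhd, mem_filter, mem_univ, true_and, not_le] at hx
  exact hx.le

theorem card_add_le_card_robustOutNbhd {V : Type*} [Fintype V] {G : V → V → Prop}
    (hG : ∀ x y, ¬ (G x y ∧ G y x)) {a b c ε τ ν : ℝ}
    (ha : ∀ x, a ≤ outDeg G x) (hb : ∀ x, b ≤ inDeg G x)
    (hc : ∀ x, c ≤ (outDeg G x : ℝ) + inDeg G x)
    (habc : 3 * (Fintype.card V : ℝ) / 2 + ε * Fintype.card V ≤ a + b + c)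
    (hε : 0 < ε) (hε2 : ε ≤ 2) (hτ : 0 < τ) (hν : 0 < ν)
    (hνε : ν ≤ ε ^ 2 * τ / 100) {S : Finset V} (hS : τ * Fintype.card V ≤ #S)
    (hS' : #S ≤ (1 - τ) * Fintype.card V) :
    #S + ν * Fintype.card V ≤ #(robustOutNbhd G ν S) := by
  set n := Fintype.card V
  set R := robustOutNbhd G ν S
  by_contra! hlt
  have hR : ∀ x ∉ R, (#{y ∈ S | G y x} : ℝ) ≤ ν * n :=
    fun _ ↦ card_filter_le_of_notMem_robustOutNbhd
  have hRn : #R < #(univ : Finset V) := by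
    have : ν ≤ τ := hνε.trans (by nlinarith [mul_le_mul hε2 hε2 hε.le zero_le_two])
    rify; rw [card_univ]; nlinarith
  obtain ⟨x₀, -, hx₀⟩ := exists_mem_notMem_of_card_lt_card hRn
  have : Nonempty V := ⟨x₀⟩
  obtain ⟨x, hx⟩ := exists_outDeg_add_inDeg_add_card_sdiff_le hG hR (by positivity)
  have eS : (#S : ℝ) = #(S \ R) + #(S ∩ R) := by exact_mod_cast (card_sdiff_add_card_inter S R).symm
  have eR : (#R : ℝ) = #(S ∩ R) + #(R \ S) := by
    rw [inter_comm, add_comm]; exact_mod_cast (card_sdiff_add_card_inter R S).symm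
  have eRc : (#Rᶜ : ℝ) = #(S \ R) + #(S ∪ R)ᶜ := by
    exact_mod_cast card_compl_eq_card_sdiff_add_card_compl_union S R
  have eSc : (#Sᶜ : ℝ) = #(R \ S) + #(S ∪ R)ᶜ := by
    rw [union_comm]; exact_mod_cast card_compl_eq_card_sdiff_add_card_compl_union R S
  have en : (#(S \ R) + #(S ∩ R) + #(R \ S) + #(S ∪ R)ᶜ : ℝ) = n := by
    have := card_add_card_compl R
    rify at this
    linarith
  have hK := card_source_inter_mul_le_of_le_outDeg hG hR ha
  have hSrc := card_source_mul_le_of_le_outDeg hR ha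
  have hTgt := card_target_mul_le_of_le_outDeg hG hR ha
  have hU := card_compl_union_mul_le_of_le_inDeg hG hR hb
  have hb' := le_card_compl_add_of_le_inDeg hR hb hx₀
  rw [eRc] at hK hSrc hTgt
  rw [eS, eR] at hSrc
  rw [eR] at hTgt
  rw [eSc] at hb'
  rw [eS, eR] at hlt
  exact (degree_sum_lt_of_bounds (Nat.cast_nonneg _) (Nat.cast_nonneg _) (Nat.cast_nonneg _)
    en hε hε2 hτ hν hνε (eS ▸ hS) (by linarith) hK hSrc hTgt hU hb'
    (hc x) (by linarith [ha x, hb x]) hx).not_ge habc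

/-- Lemma: dense oriented graphs are robust outexpanders.
With the hierarchy `0 < 1/n ≪ ν ≪ τ ≤ ε/2 ≤ 1`: every oriented graph `G` on `n` vertices
(no loops or 2-cycles) with `δ⁺(G) + δ⁻(G) + δ(G) ≥ 3n/2 + εn` is a robust
`(ν,τ)`-outexpander. (The minima are encoded by quantifying over all simultaneous lower
bounds `a ≤ δ⁺(G)`, `b ≤ δ⁻(G)`, `c ≤ δ(G)` with `a + b + c ≥ 3n/2 + εn`.) -/
theorem stmt9 : ∀ ε : ℝ, 0 < ε → ε ≤ 2 → ∀ τ : ℝ, 0 < τ → τ ≤ ε / 2 →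
    ∃ ν₀ : ℝ, 0 < ν₀ ∧ ∀ ν : ℝ, 0 < ν → ν ≤ ν₀ →
    ∃ n₀ : ℕ, ∀ n : ℕ, n₀ ≤ n →
    ∀ G : Fin n → Fin n → Prop, (∀ x y, ¬ (G x y ∧ G y x)) →
    ∀ a b c : ℝ,
      (∀ x, a ≤ (outDeg G x : ℝ)) →
      (∀ x, b ≤ (inDeg G x : ℝ)) →
      (∀ x, c ≤ (outDeg G x : ℝ) + (inDeg G x : ℝ)) →
      3 * (n : ℝ) / 2 + ε * (n : ℝ) ≤ a + b + c →
      IsRobustOutexpander G ν τ := by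
  intro ε hε hε2 τ hτ _
  refine ⟨ε ^ 2 * τ / 100, by positivity, fun ν hν hνε ↦ ⟨0, fun n _ G hG a b c ha hb hc habc ↦ ?_⟩⟩
  exact fun S ↦ card_add_le_card_robustOutNbhd hG ha hb hc (by rwa [Fintype.card_fin]) hε hε2 hτ
    hν hνε
end

section
/- Suppose 1/m ≪ ε, d ≪ 1/C ≤ 1. Let G = (U,V) be a bipartite graph with vertex classes U and V of size m such that: all but at most εm vertices in V have degree at least (1−ε)dm; every pair of distinct vertices in V has at most Cd²m common neighbours; and at most εm² pairs of distinct vertices in V have at least (1+ε)d²m common neighbours. Then for all X ⊆ U and Y ⊆ V with |X|, |Y| ≥ ε^{1/6}m, the density satisfies d(X,Y) = (1 ± ε^{1/6})d. -/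
open Finset
open scoped Classical

/-!
Fix `Y` and let `g u` be the number of neighbours of `u` in `Y`. Double counting gives
`∑ u, g u = ∑ v ∈ Y, deg v ≥ (|Y| - εm)(1 - ε)dm` and `∑ u, g u ^ 2 = ∑ v, v' ∈ Y, codeg v v'`,
and the codegree hypotheses bound the latter by `(1 + ε)d²m|Y|² + Cεd²m³ + m|Y|`. Expanding
the square, the variance `∑ u, (g u - d|Y|)²` is `O(Cεd²m³)`, the diagonal term `m|Y| ≤ m²` being
absorbed because `m ≥ 1/(εd²)`. Cauchy–Schwarz over `u ∈ X` then gives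
`(e(X, Y) - d|X||Y|)² ≤ |X| · O(Cεd²m³) ≤ (ε^{1/6} d|X||Y|)²` as soon as `|X|, |Y| ≥ ε^{1/6} m`.
-/

theorem mul_le_rpow_inv_pow {K ε : ℝ} {k : ℕ} (hK : 0 < K) (hε : 0 ≤ ε)
    (hεK : ε ≤ K⁻¹ ^ (k + 1)) : K * ε ≤ (ε ^ ((1 : ℝ) / (k + 1))) ^ k := by
  set η := ε ^ ((1 : ℝ) / (k + 1))
  have hηε : η ^ (k + 1) = ε := by
    simpa [η, one_div] using Real.rpow_inv_natCast_pow hε k.succ_ne_zero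
  have hη : η ≤ K⁻¹ := by
    rw [← hηε] at hεK
    exact (pow_le_pow_iff_left₀ (by positivity) (by positivity) k.succ_ne_zero).1 hεK
  calc K * ε = K * η * η ^ k := by rw [← hηε]; ring
    _ ≤ K * K⁻¹ * η ^ k := by gcongr
    _ = η ^ k := by rw [mul_inv_cancel₀ hK.ne', one_mul]

theorem card_sub_card_filter_lt_mul_le_sum {ι : Type*} [Fintype ι] (s : Finset ι)
    {f : ι → ℝ} (hf : ∀ i, 0 ≤ f i) {a : ℝ} (ha : 0 ≤ a) :
    ((#s : ℝ) - #{i | f i < a}) * a ≤ ∑ i ∈ s, f i := by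
  have hcard : (#s : ℝ) - #{i | f i < a} ≤ #{i ∈ s | a ≤ f i} := by
    have hlow : #{i ∈ s | ¬a ≤ f i} ≤ #{i | f i < a} := card_le_card fun i hi => by simp_all
    rw [sub_le_iff_le_add]
    exact_mod_cast (card_filter_add_card_filter_not (fun i => a ≤ f i)).symm.trans_le
      (Nat.add_le_add_left hlow _)
  calc ((#s : ℝ) - #{i | f i < a}) * a ≤ #{i ∈ s | a ≤ f i} • a := by
        rw [nsmul_eq_mul]; gcongr
    _ ≤ ∑ i ∈ s with a ≤ f i, f i := card_nsmul_le_sum _ _ _ fun i hi => (mem_filter.1 hi).2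
    _ ≤ ∑ i ∈ s, f i := sum_le_sum_of_subset_of_nonneg (filter_subset _ _) fun i _ _ => hf i

section Codegree

variable {U V : Type*} [Fintype U] (G : U → V → Prop)

noncomputable def degIn (Y : Finset V) (u : U) : ℕ := #{v ∈ Y | G u v}

noncomputable def deg (v : V) : ℕ := #{u | G u v}

noncomputable def codeg (v v' : V) : ℕ := #{u | G u v ∧ G u v'}

theorem eCnt_eq_sum_degIn [Fintype V] (X : Finset U) (Y : Finset V) :
    eCnt G X Y = ∑ u ∈ X, degIn G Y u := by
  simp only [eCnt, degIn, card_filter, sum_product]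

theorem sum_degIn_eq_sum_deg (Y : Finset V) : ∑ u, degIn G Y u = ∑ v ∈ Y, deg G v :=
  sum_card_bipartiteAbove_eq_sum_card_bipartiteBelow G

theorem sum_degIn_sq_eq_sum_codeg (Y : Finset V) :
    ∑ u, degIn G Y u ^ 2 = ∑ p ∈ Y ×ˢ Y, codeg G p.1 p.2 := by
  simp only [degIn, codeg, card_filter, sq, sum_mul_sum, ite_zero_mul_ite_zero, mul_one,
    sum_product]
  rw [sum_comm]
  exact sum_congr rfl fun v _ => sum_comm

theorem codeg_le_ite [DecidableEq V] {B c : ℝ}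
    (hcod : ∀ v v', v ≠ v' → (codeg G v v' : ℝ) ≤ B) (hc : 0 ≤ c) (p : V × V) :
    (codeg G p.1 p.2 : ℝ) ≤ (if p.1 = p.2 then (Fintype.card U : ℝ) else 0) +
      (if p.1 ≠ p.2 ∧ c ≤ codeg G p.1 p.2 then B else 0) + c := by
  obtain ⟨v, v'⟩ := p
  by_cases hvv' : v = v'
  · subst hvv'
    have : codeg G v v ≤ Fintype.card U := card_le_univ _
    simp only [if_true, ne_eq, not_true_eq_false, false_and, if_false]
    linarith [(Nat.cast_le (α := ℝ)).2 this]
  · by_cases hbad : c ≤ codeg G v v'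
    · simp only [hvv', hbad, if_false, ne_eq, not_false_eq_true, and_self, if_true]
      linarith [hcod v v' hvv']
    · simp only [hvv', hbad, if_false, ne_eq, not_false_eq_true, true_and]
      linarith

theorem sum_codeg_le [Fintype V] [DecidableEq V] {B c : ℝ} (hB : 0 ≤ B) (hc : 0 ≤ c)
    (hcod : ∀ v v', v ≠ v' → (codeg G v v' : ℝ) ≤ B) (Y : Finset V) :
    ∑ p ∈ Y ×ˢ Y, (codeg G p.1 p.2 : ℝ) ≤ #Y * Fintype.card U +
      #{p : V × V | p.1 ≠ p.2 ∧ c ≤ codeg G p.1 p.2} * B + #Y ^ 2 * c := calc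
  _ ≤ ∑ p ∈ Y ×ˢ Y, ((if p.1 = p.2 then (Fintype.card U : ℝ) else 0) +
      (if p.1 ≠ p.2 ∧ c ≤ codeg G p.1 p.2 then B else 0) + c) :=
    sum_le_sum fun p _ => codeg_le_ite G hcod hc p
  _ = #Y.diag * Fintype.card U + #{p ∈ Y ×ˢ Y | p.1 ≠ p.2 ∧ c ≤ codeg G p.1 p.2} * B +
      #Y ^ 2 * c := by
    simp only [sum_add_distrib, sum_ite, sum_const_zero, sum_const, nsmul_eq_mul, add_zero,
      card_product, diag_eq_filter]
    push_cast; ring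
  _ ≤ _ := by
    rw [diag_card]
    gcongr
    exact subset_univ _

theorem sum_sq_degIn_sub_le [Fintype V] [DecidableEq V] {Y : Finset V} {n ε d C : ℝ}
    (hU : (Fintype.card U : ℝ) ≤ n) (hY : (#Y : ℝ) ≤ n) (hε : 0 ≤ ε) (hε1 : ε ≤ 1)
    (hd : 0 ≤ d) (hC : 0 ≤ C) (hn : 1 ≤ ε * d ^ 2 * n)
    (hdeg : (#{v | (deg G v : ℝ) < (1 - ε) * d * n} : ℝ) ≤ ε * n)
    (hcod : ∀ v v', v ≠ v' → (codeg G v v' : ℝ) ≤ C * d ^ 2 * n)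
    (hbad : (#{p : V × V | p.1 ≠ p.2 ∧ (1 + ε) * d ^ 2 * n ≤ codeg G p.1 p.2} : ℝ) ≤
      ε * n ^ 2) :
    ∑ u, ((degIn G Y u : ℝ) - d * #Y) ^ 2 ≤ (C + 6) * ε * d ^ 2 * n ^ 3 := by
  set y : ℝ := (#Y : ℝ)
  have hn0 : 0 ≤ n := (Nat.cast_nonneg _).trans hU
  have hy0 : 0 ≤ y := Nat.cast_nonneg _
  have hsq : ∑ u, (degIn G Y u : ℝ) ^ 2 ≤
      y * n + ε * n ^ 2 * (C * d ^ 2 * n) + y ^ 2 * ((1 + ε) * d ^ 2 * n) := by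
    have hcast : ((∑ u, degIn G Y u ^ 2 : ℕ) : ℝ) = ∑ p ∈ Y ×ˢ Y, (codeg G p.1 p.2 : ℝ) := by
      rw [sum_degIn_sq_eq_sum_codeg]; push_cast; rfl
    push_cast at hcast
    rw [hcast]
    refine (sum_codeg_le G (c := (1 + ε) * d ^ 2 * n) (by positivity) (by positivity) hcod Y).trans
      ?_
    gcongr
  have hsum : (y - ε * n) * ((1 - ε) * d * n) ≤ ∑ u, (degIn G Y u : ℝ) := by
    have hcast : ((∑ u, degIn G Y u : ℕ) : ℝ) = ∑ v ∈ Y, (deg G v : ℝ) := by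
      rw [sum_degIn_eq_sum_deg]; push_cast; rfl
    push_cast at hcast
    rw [hcast]
    have ha : 0 ≤ (1 - ε) * d * n := mul_nonneg (mul_nonneg (by linarith) hd) hn0
    refine le_trans ?_ (card_sub_card_filter_lt_mul_le_sum Y (fun v => Nat.cast_nonneg _) ha)
    gcongr
  have hexpand : ∑ u, ((degIn G Y u : ℝ) - d * y) ^ 2 = ∑ u, (degIn G Y u : ℝ) ^ 2 -
      2 * (d * y) * ∑ u, (degIn G Y u : ℝ) + Fintype.card U * (d * y) ^ 2 := by
    have hsq_sub (a : ℝ) : (a - d * y) ^ 2 = a ^ 2 - 2 * (d * y) * a + (d * y) ^ 2 := by ring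
    simp only [hsq_sub, sum_add_distrib, sum_sub_distrib, ← mul_sum, sum_const, card_univ,
      nsmul_eq_mul]
  rw [hexpand]
  have hlin := mul_le_mul_of_nonneg_left hsum (by positivity : 0 ≤ 2 * (d * y))
  have hconst : Fintype.card U * (d * y) ^ 2 ≤ n * (d * y) ^ 2 := by gcongr
  have hdiag : y * n ≤ ε * d ^ 2 * n ^ 3 := calc
    y * n ≤ n ^ 2 * 1 := by nlinarith
    _ ≤ n ^ 2 * (ε * d ^ 2 * n) := by gcongr
    _ = ε * d ^ 2 * n ^ 3 := by ring
  have hquad : 3 * ε * d ^ 2 * n * y ^ 2 ≤ 3 * ε * d ^ 2 * n * n ^ 2 := by gcongr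
  have hmixed : 2 * ε * d ^ 2 * n ^ 2 * ((1 - ε) * y) ≤ 2 * ε * d ^ 2 * n ^ 2 * n := by
    gcongr; nlinarith
  -- the main terms `d²ny²` cancel, leaving `ny + Cεd²n³ + 3εd²ny² + 2ε(1 - ε)d²n²y`
  linarith

theorem dens_mem_of_sum_sq_degIn_sub_le [Fintype V] {X : Finset U} {Y : Finset V}
    {n d η K : ℝ} (hn : 0 < n) (hd : 0 ≤ d) (hη : 0 < η) (hX : η * n ≤ #X) (hY : η * n ≤ #Y)
    (hvar : ∑ u, ((degIn G Y u : ℝ) - d * #Y) ^ 2 ≤ K * d ^ 2 * n ^ 3) (hK : K ≤ η ^ 5) :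
    (1 - η) * d ≤ dens G X Y ∧ dens G X Y ≤ (1 + η) * d := by
  set x : ℝ := (#X : ℝ)
  set y : ℝ := (#Y : ℝ)
  have hx : 0 < x := hX.trans_lt' (by positivity)
  have hy : 0 < y := hY.trans_lt' (by positivity)
  have hdev : ((eCnt G X Y : ℝ) - d * x * y) ^ 2 ≤ (η * d * x * y) ^ 2 := calc
    ((eCnt G X Y : ℝ) - d * x * y) ^ 2 = (∑ u ∈ X, ((degIn G Y u : ℝ) - d * y)) ^ 2 := by
      rw [eCnt_eq_sum_degIn, sum_sub_distrib, sum_const, nsmul_eq_mul]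
      push_cast
      ring
    _ ≤ x * ∑ u ∈ X, ((degIn G Y u : ℝ) - d * y) ^ 2 := sq_sum_le_card_mul_sum_sq
    _ ≤ x * (K * d ^ 2 * n ^ 3) := by
      gcongr
      exact (sum_le_sum_of_subset_of_nonneg (subset_univ X) fun _ _ _ => sq_nonneg _).trans hvar
    _ ≤ x * (η ^ 5 * d ^ 2 * n ^ 3) := by gcongr
    _ = η ^ 2 * d ^ 2 * x * (η * n) * (η * n) ^ 2 := by ring
    _ ≤ η ^ 2 * d ^ 2 * x * x * y ^ 2 := by gcongr
    _ = (η * d * x * y) ^ 2 := by ring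
  obtain ⟨hlo, hhi⟩ := abs_le_of_sq_le_sq' hdev (by positivity)
  rw [_root_.dens, le_div_iff₀ (by positivity), div_le_iff₀ (by positivity)]
  constructor <;> linarith

end Codegree

/-- Lemma: codegree criterion for sparse regularity.
With the hierarchy `1/m ≪ ε, d ≪ 1/C ≤ 1`: let `G` be a bipartite graph with vertex
classes `U` and `V` of size `m` (both `Fin m`; `G u v` means `u ∈ U` is joined to
`v ∈ V`). Suppose all but at most `εm` vertices of `V` have degree at least `(1−ε)dm`,
every pair of distinct vertices of `V` has at most `Cd²m` common neighbours, and at most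
`εm²` ordered pairs of distinct vertices of `V` are bad (have at least `(1+ε)d²m` common
neighbours). Then for all `X ⊆ U`, `Y ⊆ V` with `|X|, |Y| ≥ ε^{1/6} m` the density
satisfies `d(X,Y) = (1 ± ε^{1/6})d`. -/
theorem stmt10 : ∀ C : ℝ, 1 ≤ C → ∃ ε₀ : ℝ, 0 < ε₀ ∧ ∀ ε d : ℝ,
    0 < ε → ε ≤ ε₀ → 0 < d → d ≤ ε₀ →
    ∃ m₀ : ℕ, ∀ m : ℕ, m₀ ≤ m → ∀ G : Fin m → Fin m → Prop,
    (((Finset.univ : Finset (Fin m)).filter (fun v =>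
        ((Finset.univ.filter (fun u => G u v)).card : ℝ) < (1 - ε) * d * (m : ℝ))).card : ℝ)
      ≤ ε * (m : ℝ) →
    (∀ v v' : Fin m, v ≠ v' →
        ((Finset.univ.filter (fun u => G u v ∧ G u v')).card : ℝ) ≤ C * d ^ 2 * (m : ℝ)) →
    ((((Finset.univ : Finset (Fin m)) ×ˢ (Finset.univ : Finset (Fin m))).filter
        (fun p : Fin m × Fin m => p.1 ≠ p.2 ∧ (1 + ε) * d ^ 2 * (m : ℝ) ≤
          ((Finset.univ.filter (fun u => G u p.1 ∧ G u p.2)).card : ℝ))).card : ℝ)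
      ≤ ε * (m : ℝ) ^ 2 →
    ∀ X Y : Finset (Fin m),
      ε ^ ((1 : ℝ) / 6) * (m : ℝ) ≤ (X.card : ℝ) →
      ε ^ ((1 : ℝ) / 6) * (m : ℝ) ≤ (Y.card : ℝ) →
      (1 - ε ^ ((1 : ℝ) / 6)) * d ≤ dens G X Y ∧
        dens G X Y ≤ (1 + ε ^ ((1 : ℝ) / 6)) * d := by
  intro C hC
  refine ⟨(C + 6)⁻¹ ^ 6, by positivity, fun ε d hε hε₀ hd _ => ⟨⌈(ε * d ^ 2)⁻¹⌉₊,
    fun m hm G hdeg hcod hbad X Y hX hY => ?_⟩⟩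
  have hε1 : ε ≤ 1 :=
    hε₀.trans (pow_le_one₀ (by positivity) (inv_le_one_of_one_le₀ (by linarith)))
  have hεη : (C + 6) * ε ≤ (ε ^ ((1 : ℝ) / 6)) ^ 5 := by
    have := mul_le_rpow_inv_pow (k := 5) (by linarith : 0 < C + 6) hε.le hε₀
    norm_num at this ⊢
    exact this
  have hm : 1 ≤ ε * d ^ 2 * m := by
    have := (Nat.le_ceil _).trans (Nat.cast_le (α := ℝ).2 hm)
    rwa [inv_le_iff_one_le_mul₀ (by positivity), mul_comm] at this
  have hm0 : (0 : ℝ) < m := pos_of_mul_pos_right (one_pos.trans_le hm) (by positivity)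
  have hvar := sum_sq_degIn_sub_le G (Y := Y) (n := m) (by simp)
    (by exact_mod_cast (card_le_univ Y).trans_eq (Fintype.card_fin m)) hε.le hε1 hd.le
    (by linarith) hm hdeg hcod (by rw [univ_product_univ] at hbad; exact hbad)
  exact dens_mem_of_sum_sq_degIn_sub_le G hm0 hd.le (by positivity) hX hY hvar hεη
end

section
/- Let q ∈ ℕ, and suppose 0 < 1/n ≪ ε ≪ ν ≤ τ ≪ α < 1 and 1/n ≪ ξ ≤ qν²/3. Let G be a digraph on n vertices with δ⁰(G) ≥ αn which is a robust (ν,τ)-outexpander. Let Q be a multidigraph on V(G) containing at least q edges from x to y whenever xy ∈ E(G). For every vertex x let n⁺ₓ, n⁻ₓ ∈ ℕ satisfy (1−ε)ξn ≤ n⁺ₓ, n⁻ₓ ≤ (1+ε)ξn with Σₓ n⁺ₓ = Σₓ n⁻ₓ. Then Q contains a spanning submultidigraph Q' with d⁺_{Q'}(x) = n⁺ₓ and d⁻_{Q'}(x) = n⁻ₓ for every vertex x. -/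
open Finset
open scoped Classical

/-!
By Hall's theorem, applied to a bipartite gadget whose perfect matchings encode submultigraphs
of `Q` with the prescribed degrees, the multigraph `Q'` exists as soon as the cut condition
`∑_{x ∈ A} n⁺ₓ ≤ e_Q(A, B) + ∑_{y ∉ B} n⁻_y` holds for all vertex sets `A` and `B`
(Gale's supply–demand theorem, i.e. max-flow min-cut for this network).

The cut condition is checked according to the size of `A`. If `|A|` is noticeably smaller than
`|Bᶜ|`, the demand outside `B` already covers the supply of `A`. If `|A| < τn`, then `|Bᶜ| < αn/2`
and the minimum out-degree gives every `x ∈ A` at least `αn/2` out-neighbours in `B`, hence at least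
`qαn/2 ≥ n⁺ₓ` edges of `Q` into `B`; dually, if `|A| > (1-τ)n` the minimum in-degree covers the
demand of `B`. In the remaining range robust expansion yields `νn/2` vertices of `B` with `νn`
in-neighbours in `A`, so `e_Q(A, B) ≥ qν²n²/2 ≥ (1+ε)ξn² ≥ ∑_{x ∈ A} n⁺ₓ`.
-/

lemma card_filter_sigma_fst_eq {α : Type*} [Fintype α] [DecidableEq α] (F : α → ℕ) (a : α) :
    #{e : Σ a, Fin (F a) | e.1 = a} = F a := by
  have : ({e : Σ a, Fin (F a) | e.1 = a} : Finset _) = univ.map (Function.Embedding.sigmaMk a) := by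
    ext ⟨b, k⟩
    simp only [mem_filter, mem_univ, true_and, mem_map, Function.Embedding.sigmaMk_apply]
    constructor
    · rintro rfl
      exact ⟨k, rfl⟩
    · rintro ⟨k, hk⟩
      exact (Sigma.mk.inj_iff.1 hk).1.symm
  rw [this, card_map, card_univ, Fintype.card_fin]

lemma mul_card_filter_le_sum {α : Type*} {s : Finset α} {p : α → Prop} {f : α → ℕ} {q : ℕ}
    (h : ∀ x ∈ s, p x → q ≤ f x) : q * #{x ∈ s | p x} ≤ ∑ x ∈ s, f x :=
  calc q * #{x ∈ s | p x} = #{x ∈ s | p x} • q := by rw [smul_eq_mul, mul_comm]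
    _ ≤ ∑ x ∈ s with p x, f x :=
        card_nsmul_le_sum _ _ _ fun x hx => h x (mem_filter.1 hx).1 (mem_filter.1 hx).2
    _ ≤ ∑ x ∈ s, f x := sum_le_sum_of_subset (filter_subset _ _)

lemma card_filter_le_card_filter_add_card_compl {α : Type*} [Fintype α] (p : α → Prop)
    (s : Finset α) : #{x | p x} ≤ #{x ∈ s | p x} + #sᶜ :=
  calc #{x | p x} ≤ #({x ∈ s | p x} ∪ sᶜ) := card_le_card fun x hx => by
        by_cases hxs : x ∈ s <;> simp_all
    _ ≤ #{x ∈ s | p x} + #sᶜ := card_union_le _ _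

section Transport

variable {ι κ : Type*} [Fintype ι] [Fintype κ] {Q : ι → κ → ℕ} {s : ι → ℕ} {d : κ → ℕ}

variable (Q) in
abbrev EdgeCopy := Σ p : ι × κ, Fin (Q p.1 p.2)

variable (Q s d) in
def transportRel : (Σ i, Fin (s i)) ⊕ EdgeCopy Q → (Σ j, Fin (d j)) ⊕ EdgeCopy Q → Prop
  | .inl a, .inr e => e.1.1 = a.1
  | .inr e, .inr e' => e = e'
  | .inr e, .inl b => e.1.2 = b.1
  | .inl _, .inl _ => False

lemma card_le_card_transportRel_nbhd
    (hcut : ∀ (A : Finset ι) (B : Finset κ),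
      ∑ i ∈ A, s i ≤ ∑ i ∈ A, ∑ j ∈ B, Q i j + ∑ j ∈ Bᶜ, d j)
    (S : Finset ((Σ i, Fin (s i)) ⊕ EdgeCopy Q)) :
    #S ≤ #{r | ∃ l ∈ S, transportRel Q s d l r} := by
  -- the right copies of the edge copies in `S` and of all edges leaving the tails `A` of the supply
  rw [← card_toLeft_add_card_toRight (u := S)]
  set A := S.toLeft.image Sigma.fst
  set T := S.toRight
  set B := T.image fun e => e.1.2
  set EA : Finset (EdgeCopy Q) := (A ×ˢ univ).sigma fun _ => univ
  set EAB : Finset (EdgeCopy Q) := (A ×ˢ B).sigma fun _ => univ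
  have hleft : #S.toLeft ≤ ∑ i ∈ A, s i := by
    calc #S.toLeft ≤ #(A.sigma fun i => (univ : Finset (Fin (s i)))) :=
          card_le_card fun a ha => mem_sigma.2 ⟨mem_image_of_mem _ ha, mem_univ _⟩
      _ = ∑ i ∈ A, s i := by simp [card_sigma]
  have hright : #T ≤ ∑ i ∈ A, ∑ j ∈ B, Q i j + #(T \ EA) := by
    rw [← card_inter_add_card_sdiff T EA]
    have hsub : T ∩ EA ⊆ EAB := fun e he => by
      simp only [mem_inter, EA, EAB, mem_sigma, mem_product, mem_univ, and_true] at he ⊢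
      exact ⟨he.2, mem_image_of_mem _ he.1⟩
    have hEAB : #EAB = ∑ i ∈ A, ∑ j ∈ B, Q i j := by simp [EAB, card_sigma, sum_product]
    have := card_le_card hsub
    omega
  have hEA : #EA = ∑ i ∈ A, ∑ j ∈ B, Q i j + ∑ i ∈ A, ∑ j ∈ Bᶜ, Q i j := by
    simp [EA, card_sigma, sum_product, ← sum_add_distrib, sum_add_sum_compl]
  have hnbhd : (B.sigma fun j => (univ : Finset (Fin (d j)))).disjSum (T ∪ EA) ⊆
      ({r | ∃ l ∈ S, transportRel Q s d l r} : Finset _) := by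
    rintro (⟨j, k⟩ | e) hr
    · obtain ⟨e, he, rfl⟩ : ∃ e ∈ T, e.1.2 = j := by simpa [B] using hr
      exact mem_filter.2 ⟨mem_univ _, .inr e, mem_toRight.1 he, rfl⟩
    · rcases mem_union.1 (inr_mem_disjSum.1 hr) with he | he
      · exact mem_filter.2 ⟨mem_univ _, .inr e, mem_toRight.1 he, rfl⟩
      · obtain ⟨a, ha, hae⟩ : ∃ a ∈ S.toLeft, a.1 = e.1.1 := by simpa [EA, A] using he
        exact mem_filter.2 ⟨mem_univ _, .inl a, mem_toLeft.1 ha, hae.symm⟩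
  have hcard := card_le_card hnbhd
  rw [card_disjSum, ← card_sdiff_add_card, hEA] at hcard
  have hsigma : #(B.sigma fun j => (univ : Finset (Fin (d j)))) = ∑ j ∈ B, d j := by
    simp [card_sigma]
  have hc := hcut A Bᶜ
  rw [compl_compl] at hc
  omega

variable (Q s d) in
def usedCopies (f : (Σ i, Fin (s i)) ⊕ EdgeCopy Q → (Σ j, Fin (d j)) ⊕ EdgeCopy Q) :
    Finset (EdgeCopy Q) :=
  {e | (f (.inr e)).isLeft}

section Matching

variable {f : (Σ i, Fin (s i)) ⊕ EdgeCopy Q → (Σ j, Fin (d j)) ⊕ EdgeCopy Q}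

lemma exists_usedCopies_of_transportRel (hf : Function.Injective f)
    (hrel : ∀ l, transportRel Q s d l (f l)) (a : Σ i, Fin (s i)) :
    ∃ e ∈ usedCopies Q s d f, f (.inl a) = .inr e ∧ e.1.1 = a.1 := by
  have ha := hrel (.inl a)
  rcases hfa : f (.inl a) with b | e
  · simp [hfa, transportRel] at ha
  refine ⟨e, ?_, rfl, by simpa [hfa, transportRel] using ha⟩
  have he := hrel (.inr e)
  rcases hfe : f (.inr e) with b | e'
  · simp [usedCopies, hfe]
  · obtain rfl : e = e' := by simpa [hfe, transportRel] using he
    exact absurd (hf (hfe.trans hfa.symm)) Sum.inr_ne_inl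

lemma exists_demand_of_mem_usedCopies (hrel : ∀ l, transportRel Q s d l (f l))
    {e : EdgeCopy Q} (he : e ∈ usedCopies Q s d f) : ∃ b, f (.inr e) = .inl b ∧ e.1.2 = b.1 := by
  have hrele := hrel (.inr e)
  rcases hfe : f (.inr e) with b | e'
  · exact ⟨b, rfl, by simpa [hfe, transportRel] using hrele⟩
  · simp [usedCopies, hfe] at he

lemma le_card_usedCopies_fst (hf : Function.Injective f)
    (hrel : ∀ l, transportRel Q s d l (f l)) (i : ι) :
    s i ≤ #{e ∈ usedCopies Q s d f | e.1.1 = i} :=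
  calc s i = #{a : Σ i, Fin (s i) | a.1 = i} := (card_filter_sigma_fst_eq s i).symm
    _ ≤ #({e ∈ usedCopies Q s d f | e.1.1 = i}.map .inr) := by
        refine card_le_card_of_injOn (f ∘ .inl) (fun a ha => ?_) (hf.comp Sum.inl_injective).injOn
        obtain ⟨e, he, hfa, hea⟩ := exists_usedCopies_of_transportRel hf hrel a
        simp only [coe_filter, Set.mem_ofPred_eq, mem_univ, true_and] at ha
        simp [hfa, he, hea, ha]
    _ = #{e ∈ usedCopies Q s d f | e.1.1 = i} := card_map _

lemma card_usedCopies_snd_le (hf : Function.Injective f)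
    (hrel : ∀ l, transportRel Q s d l (f l)) (j : κ) :
    #{e ∈ usedCopies Q s d f | e.1.2 = j} ≤ d j :=
  calc #{e ∈ usedCopies Q s d f | e.1.2 = j}
      ≤ #(({b : Σ j, Fin (d j) | b.1 = j} : Finset _).map .inl) := by
        refine card_le_card_of_injOn (f ∘ .inr) (fun e he => ?_) (hf.comp Sum.inr_injective).injOn
        simp only [coe_filter, Set.mem_ofPred_eq] at he
        obtain ⟨b, hfe, heb⟩ := exists_demand_of_mem_usedCopies hrel he.1
        simp [hfe, ← heb, he.2]
    _ = d j := (card_map _).trans (card_filter_sigma_fst_eq d j)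

lemma exists_le_sum_eq_of_injective (hsum : ∑ i, s i = ∑ j, d j)
    (hf : Function.Injective f) (hrel : ∀ l, transportRel Q s d l (f l)) :
    ∃ Q' : ι → κ → ℕ, (∀ i j, Q' i j ≤ Q i j) ∧
      (∀ i, ∑ j, Q' i j = s i) ∧ (∀ j, ∑ i, Q' i j = d j) := by
  set U := usedCopies Q s d f
  have hrow := le_card_usedCopies_fst hf hrel
  have hcol := card_usedCopies_snd_le hf hrel
  have hU_row : #U = ∑ i, #{e ∈ U | e.1.1 = i} := card_eq_sum_card_fiberwise (by simp)
  have hU_col : #U = ∑ j, #{e ∈ U | e.1.2 = j} := card_eq_sum_card_fiberwise (by simp)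
  have hrow_eq : ∀ i, #{e ∈ U | e.1.1 = i} = s i := by
    have hle : ∑ i, #{e ∈ U | e.1.1 = i} ≤ ∑ i, s i := by
      rw [← hU_row, hU_col, hsum]
      exact sum_le_sum fun j _ => hcol j
    intro i
    exact ((sum_eq_sum_iff_of_le fun i _ => hrow i).1
      (le_antisymm (sum_le_sum fun i _ => hrow i) hle) i (mem_univ _)).symm
  have hcol_eq : ∀ j, #{e ∈ U | e.1.2 = j} = d j := by
    have hle : ∑ j, d j ≤ ∑ j, #{e ∈ U | e.1.2 = j} := by
      rw [← hU_col, hU_row, ← hsum]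
      exact sum_le_sum fun i _ => hrow i
    intro j
    exact (sum_eq_sum_iff_of_le fun j _ => hcol j).1
      (le_antisymm (sum_le_sum fun j _ => hcol j) hle) j (mem_univ _)
  refine ⟨fun i j => #{e ∈ U | e.1 = (i, j)}, fun i j => ?_, fun i => ?_, fun j => ?_⟩
  · calc #{e ∈ U | e.1 = (i, j)} ≤ #{e : EdgeCopy Q | e.1 = (i, j)} :=
          card_le_card (filter_subset_filter _ (subset_univ U))
      _ = Q i j := card_filter_sigma_fst_eq (fun p : ι × κ => Q p.1 p.2) (i, j)
  · rw [← hrow_eq, card_eq_sum_card_fiberwise (f := fun e => e.1.2) (t := univ) (by simp)]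
    simp only [filter_filter, Prod.ext_iff]
  · rw [← hcol_eq, card_eq_sum_card_fiberwise (f := fun e => e.1.1) (t := univ) (by simp)]
    simp only [filter_filter, Prod.ext_iff, and_comm]

end Matching

theorem exists_le_sum_eq_of_cut (hsum : ∑ i, s i = ∑ j, d j)
    (hcut : ∀ (A : Finset ι) (B : Finset κ),
      ∑ i ∈ A, s i ≤ ∑ i ∈ A, ∑ j ∈ B, Q i j + ∑ j ∈ Bᶜ, d j) :
    ∃ Q' : ι → κ → ℕ, (∀ i j, Q' i j ≤ Q i j) ∧
      (∀ i, ∑ j, Q' i j = s i) ∧ (∀ j, ∑ i, Q' i j = d j) := by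
  obtain ⟨f, hf, hrel⟩ := (Fintype.all_card_le_filter_rel_iff_exists_injective _).1
    (card_le_card_transportRel_nbhd hcut)
  exact exists_le_sum_eq_of_injective hsum hf hrel

end Transport

section CutCondition

variable {V : Type*} {G : V → V → Prop} {Q : V → V → ℕ} {q : ℕ}

lemma mul_card_filter_le_sum_sum (hQ : ∀ x y, G x y → q ≤ Q x y) (A B : Finset V) (t : ℝ) :
    q * t * #{y ∈ B | t ≤ #{x ∈ A | G x y}} ≤ ∑ x ∈ A, ∑ y ∈ B, (Q x y : ℝ) := by
  rw [sum_comm]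
  calc q * t * #{y ∈ B | t ≤ #{x ∈ A | G x y}}
      = ∑ y ∈ B with t ≤ #{x ∈ A | G x y}, q * t := by rw [sum_const, nsmul_eq_mul, mul_comm]
    _ ≤ ∑ y ∈ B with t ≤ #{x ∈ A | G x y}, ∑ x ∈ A, (Q x y : ℝ) := by
        refine sum_le_sum fun y hy => ?_
        have hQy : ((q * #{x ∈ A | G x y} : ℕ) : ℝ) ≤ ∑ x ∈ A, Q x y := by
          exact_mod_cast mul_card_filter_le_sum fun x _ => hQ x y
        push_cast at hQy
        exact (mul_le_mul_of_nonneg_left (mem_filter.1 hy).2 q.cast_nonneg).trans hQy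
    _ ≤ ∑ y ∈ B, ∑ x ∈ A, (Q x y : ℝ) :=
        sum_le_sum_of_subset_of_nonneg (filter_subset _ _) fun _ _ _ => by positivity

variable [Fintype V]

lemma sum_le_sum_sum_of_le_outDeg (hQ : ∀ x y, G x y → q ≤ Q x y) {A B : Finset V} {f : V → ℕ}
    (h : ∀ x ∈ A, (f x : ℝ) ≤ q * ((outDeg G x : ℝ) - #Bᶜ)) :
    ∑ x ∈ A, f x ≤ ∑ x ∈ A, ∑ y ∈ B, Q x y := by
  refine sum_le_sum fun x hx => ?_
  have hdeg : (outDeg G x : ℝ) ≤ #{y ∈ B | G x y} + #Bᶜ := by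
    exact_mod_cast card_filter_le_card_filter_add_card_compl (G x) B
  have hQx : ((q * #{y ∈ B | G x y} : ℕ) : ℝ) ≤ ∑ y ∈ B, Q x y := by
    exact_mod_cast mul_card_filter_le_sum fun y _ => hQ x y
  push_cast at hQx
  have := mul_le_mul_of_nonneg_left (show (outDeg G x : ℝ) - #Bᶜ ≤ #{y ∈ B | G x y} by linarith)
    q.cast_nonneg
  exact_mod_cast (h x hx).trans (this.trans hQx)

lemma sum_le_sum_sum_of_le_inDeg (hQ : ∀ x y, G x y → q ≤ Q x y) {A B : Finset V} {f : V → ℕ}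
    (h : ∀ y ∈ B, (f y : ℝ) ≤ q * ((inDeg G y : ℝ) - #Aᶜ)) :
    ∑ y ∈ B, f y ≤ ∑ x ∈ A, ∑ y ∈ B, Q x y := by
  rw [sum_comm]
  exact sum_le_sum_sum_of_le_outDeg (G := flip G) (Q := flip Q) (fun y x => hQ x y) h

lemma sum_le_sum_sum_of_isRobustOutexpander {np : V → ℕ} {ν τ u : ℝ} {A B : Finset V}
    (hν : 0 ≤ ν) (hexp : IsRobustOutexpander G ν τ) (hQ : ∀ x y, G x y → q ≤ Q x y)
    (hA_ge : τ * Fintype.card V ≤ #A) (hA_le : #A ≤ (1 - τ) * Fintype.card V)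
    (hBA : (#Bᶜ : ℝ) ≤ #A + ν * Fintype.card V / 2)
    (hnp : ∀ x ∈ A, (np x : ℝ) ≤ u) (hu : 0 ≤ u) (hqu : 2 * u ≤ q * ν ^ 2 * Fintype.card V) :
    ∑ x ∈ A, np x ≤ ∑ x ∈ A, ∑ y ∈ B, Q x y := by
  have hAN : (#A : ℝ) ≤ Fintype.card V := by exact_mod_cast card_le_univ A
  set N : ℝ := (Fintype.card V : ℝ)
  have hRN : #A + ν * N ≤ (#(robustOutNbhd G ν A) : ℝ) := hexp A hA_ge hA_le
  have hRNB : (#(robustOutNbhd G ν A) : ℝ) ≤ #{y ∈ B | ν * N ≤ #{x ∈ A | G x y}} + #Bᶜ := by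
    exact_mod_cast card_filter_le_card_filter_add_card_compl _ B
  have hSp : ∑ x ∈ A, (np x : ℝ) ≤ #A * u := by
    simpa using sum_le_card_nsmul A (fun x => (np x : ℝ)) u hnp
  have hA_u := mul_le_mul_of_nonneg_right hAN hu
  have hN_u := mul_le_mul_of_nonneg_left hqu (Nat.cast_nonneg _ : 0 ≤ N)
  have hrich := mul_le_mul_of_nonneg_left (show ν * N / 2 ≤ #{y ∈ B | ν * N ≤ #{x ∈ A | G x y}}
    by linarith) (by positivity : (0 : ℝ) ≤ q * (ν * N))
  have hQAB := mul_card_filter_le_sum_sum hQ A B (ν * N)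
  exact_mod_cast (show ∑ x ∈ A, (np x : ℝ) ≤ ∑ x ∈ A, ∑ y ∈ B, (Q x y : ℝ) by linarith)

theorem sum_le_sum_sum_add_sum_compl {np nm : V → ℕ} {α ν τ ε ξ : ℝ}
    (hα : α ≤ 1) (hν : 0 < ν) (hντ : ν ≤ τ) (hτα : τ ≤ α / 4) (hε : 0 ≤ ε) (hεν : ε ≤ ν / 5)
    (hξ : 0 ≤ ξ) (hξq : ξ ≤ q * ν ^ 2 / 3)
    (hdeg : ∀ x, α * Fintype.card V ≤ outDeg G x ∧ α * Fintype.card V ≤ inDeg G x)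
    (hexp : IsRobustOutexpander G ν τ) (hQ : ∀ x y, G x y → q ≤ Q x y)
    (hnp : ∀ x, (np x : ℝ) ≤ (1 + ε) * ξ * Fintype.card V)
    (hnm : ∀ y, (1 - ε) * ξ * Fintype.card V ≤ nm y ∧ (nm y : ℝ) ≤ (1 + ε) * ξ * Fintype.card V)
    (hsum : ∑ x, np x = ∑ y, nm y) (A B : Finset V) :
    ∑ x ∈ A, np x ≤ ∑ x ∈ A, ∑ y ∈ B, Q x y + ∑ y ∈ Bᶜ, nm y := by
  have hA : (#A : ℝ) + #Aᶜ = Fintype.card V := by exact_mod_cast card_add_card_compl A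
  have hB : (#B : ℝ) + #Bᶜ = Fintype.card V := by exact_mod_cast card_add_card_compl B
  set N : ℝ := (Fintype.card V : ℝ)
  have hN : 0 ≤ N := Nat.cast_nonneg _
  have hν2 : ν ^ 2 ≤ α / 16 := by nlinarith
  have hqν : 2 * ((1 + ε) * ξ * N) ≤ q * ν ^ 2 * N := by
    have : 2 * ((1 + ε) * ξ) ≤ q * ν ^ 2 := by nlinarith
    nlinarith
  have hqα : (1 + ε) * ξ * N ≤ q * (α / 2) * N := by
    nlinarith [mul_le_mul_of_nonneg_left hν2 (Nat.cast_nonneg q : (0 : ℝ) ≤ q)]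
  rcases le_or_gt ((1 + ε) * #A) ((1 - ε) * #Bᶜ) with hsmall | hAB
  · have hSp : ∑ x ∈ A, (np x : ℝ) ≤ #A * ((1 + ε) * ξ * N) := by
      simpa using sum_le_card_nsmul A (fun x => (np x : ℝ)) _ fun x _ => hnp x
    have hSm : #Bᶜ * ((1 - ε) * ξ * N) ≤ ∑ y ∈ Bᶜ, (nm y : ℝ) := by
      simpa using card_nsmul_le_sum Bᶜ (fun y => (nm y : ℝ)) _ fun y _ => (hnm y).1
    have := mul_le_mul_of_nonneg_right hsmall (mul_nonneg hξ hN)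
    exact le_add_left (by exact_mod_cast (show ∑ x ∈ A, (np x : ℝ) ≤ ∑ y ∈ Bᶜ, (nm y : ℝ) by
      nlinarith))
  rcases lt_or_ge (#A : ℝ) (τ * N) with hA_small | hA_ge
  · refine le_add_right (sum_le_sum_sum_of_le_outDeg hQ fun x _ => (hnp x).trans ?_)
    have : α * N / 2 ≤ outDeg G x - #Bᶜ := by nlinarith [(hdeg x).1]
    nlinarith
  rcases lt_or_ge ((1 - τ) * N) #A with hA_large | hA_le
  · have hB_le : ∑ y ∈ B, nm y ≤ ∑ x ∈ A, ∑ y ∈ B, Q x y := by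
      refine sum_le_sum_sum_of_le_inDeg hQ fun y _ => (hnm y).2.trans ?_
      have : α * N / 2 ≤ inDeg G y - #Aᶜ := by nlinarith [(hdeg y).2]
      nlinarith
    calc ∑ x ∈ A, np x ≤ ∑ x, np x := sum_le_sum_of_subset (subset_univ A)
      _ = ∑ y ∈ B, nm y + ∑ y ∈ Bᶜ, nm y := by rw [hsum, sum_add_sum_compl]
      _ ≤ _ := by gcongr
  · refine le_add_right (sum_le_sum_sum_of_isRobustOutexpander hν.le hexp hQ hA_ge hA_le ?_
      (fun x _ => hnp x) (by positivity) hqν)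
    have : ε * (#A + #Bᶜ) ≤ ν / 5 * (2 * N) :=
      mul_le_mul hεν (by linarith [(#Aᶜ).cast_nonneg (α := ℝ), (#B).cast_nonneg (α := ℝ)])
        (by positivity) (by positivity)
    nlinarith

end CutCondition

/-- Lemma: prescribed degree sequences in robust outexpanders.
With the hierarchy `0 < 1/n ≪ ε ≪ ν ≤ τ ≪ α < 1` and `1/n ≪ ξ ≤ qν²/3`: let `G` be a
digraph on `n` vertices with `δ⁰(G) ≥ αn` which is a robust `(ν,τ)`-outexpander, and let
`Q` be a multidigraph on the same vertex set (given by edge multiplicities) containing at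
least `q` edges from `x` to `y` whenever `x → y ∈ E(G)`. If `n⁺ₓ, n⁻ₓ ∈ ℕ` satisfy
`(1−ε)ξn ≤ n⁺ₓ, n⁻ₓ ≤ (1+ε)ξn` and `Σ n⁺ₓ = Σ n⁻ₓ`, then `Q` has a spanning
submultidigraph `Q'` with `d⁺_{Q'}(x) = n⁺ₓ` and `d⁻_{Q'}(x) = n⁻ₓ` for every `x`. -/
theorem stmt12 : ∀ α : ℝ, 0 < α → α < 1 →
    ∃ τ₀ : ℝ, 0 < τ₀ ∧ ∀ τ ν : ℝ, 0 < ν → ν ≤ τ → τ ≤ τ₀ →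
    ∃ ε₀ : ℝ, 0 < ε₀ ∧ ∀ ε : ℝ, 0 < ε → ε ≤ ε₀ →
    ∃ (n₀ : ℕ) (Cξ : ℝ), 0 < Cξ ∧ ∀ n : ℕ, n₀ ≤ n →
    ∀ q : ℕ, 0 < q → ∀ ξ : ℝ, Cξ / (n : ℝ) ≤ ξ → ξ ≤ (q : ℝ) * ν ^ 2 / 3 →
    ∀ G : Fin n → Fin n → Prop,
    (∀ x, α * (n : ℝ) ≤ (outDeg G x : ℝ) ∧ α * (n : ℝ) ≤ (inDeg G x : ℝ)) →
    IsRobustOutexpander G ν τ →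
    ∀ Q : Fin n → Fin n → ℕ, (∀ x y, G x y → q ≤ Q x y) →
    ∀ np nm : Fin n → ℕ,
    (∀ x, (1 - ε) * ξ * (n : ℝ) ≤ (np x : ℝ) ∧ (np x : ℝ) ≤ (1 + ε) * ξ * (n : ℝ) ∧
          (1 - ε) * ξ * (n : ℝ) ≤ (nm x : ℝ) ∧ (nm x : ℝ) ≤ (1 + ε) * ξ * (n : ℝ)) →
    (∑ x, np x) = (∑ x, nm x) →
    ∃ Q' : Fin n → Fin n → ℕ, (∀ x y, Q' x y ≤ Q x y) ∧
      (∀ x, (∑ y, Q' x y) = np x ∧ (∑ y, Q' y x) = nm x) := by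
  intro α hα hα1
  refine ⟨α / 4, by positivity, fun τ ν hν hντ hτα => ⟨ν / 5, by positivity, fun ε hε hεν => ?_⟩⟩
  refine ⟨0, 1, one_pos, fun n _ q _ ξ hξ hξq G hdeg hexp Q hQ np nm hbound hsum => ?_⟩
  have hcut := sum_le_sum_sum_add_sum_compl hα1.le hν hντ hτα hε.le hεν
    ((by positivity : (0 : ℝ) ≤ 1 / n).trans hξ) hξq (by simpa using hdeg) hexp hQ
    (fun x => by simpa using (hbound x).2.1)
    (fun y => by simpa using And.intro (hbound y).2.2.1 (hbound y).2.2.2) hsum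
  obtain ⟨Q', hQ', hrow, hcol⟩ := exists_le_sum_eq_of_cut hsum hcut
  exact ⟨Q', hQ', fun x => ⟨hrow x, hcol x⟩⟩
end

section
/- Let 0 < 1/k ≪ ν ≪ τ ≪ α < 1. Suppose R is a robust (ν,τ)-outexpander on k vertices V₁,…,V_k with δ⁰(R) ≥ αk, and C = V₁…V_k is a Hamilton cycle in R. Then there exists a universal walk U for C with parameter ℓ' = 36/ν²: a closed walk in R containing, for each i, an elementary chord sequence from V_i to V_{i+1} of at most √ℓ'/2 edges, with all remaining edges of U lying on C, such that U enters and leaves every vertex V_i exactly ℓ' times. -/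
/-!
Chord sequences with respect to `C` are the walks of the digraph `x → y :⇔ R (σ⁻¹ x) y`, which,
like `R`, is a robust `(ν, τ)`-outexpander of minimum semidegree at least `αk`, and is reflexive
because `C ⊆ R`. So for a set `B` of at most `νk/4` vertices, the set of vertices reachable from
`v` in exactly `i + 1` steps avoiding `B` grows by `3νk/4` per step until it has `(1 - τ)k`
elements, and after `⌈2/ν⌉ + 1` steps it meets the in-neighbourhood of `σ v`: there is a chord
sequence from `v` to `σ v` of length `q = ⌈2/ν⌉ + 2 ≤ √ℓ'/2` whose interior avoids `B`.
Choosing these sequences one vertex at a time, with `B` the vertices already used `⌈4q/ν⌉`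
times, no vertex is used more than `⌈4q/ν⌉ + q < ℓ'` times. Adding, for every vertex `y`, as many
copies of the edge of `C` into `y` as make `y` the target of exactly `ℓ'` edges yields a
multidigraph containing `C` in which every in- and out-degree is `ℓ'`; its Euler tour is `U`.
-/

open Finset
open scoped Classical

namespace UniversalWalk

section Walks

variable {V : Type*}

def IsWalk : V → List (V × V) → V → Prop
  | a, [], b => a = b
  | a, e :: l, b => e.1 = a ∧ IsWalk e.2 l b

theorem IsWalk.append {a b c : V} {l m : List (V × V)} (hl : IsWalk a l b) (hm : IsWalk b m c) :
    IsWalk a (l ++ m) c := by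
  induction l generalizing a with
  | nil => exact (hl : a = b) ▸ hm
  | cons e l ih => exact ⟨hl.1, ih hl.2⟩

theorem IsWalk.map_fst_append {a b : V} {l : List (V × V)} (h : IsWalk a l b) :
    l.map Prod.fst ++ [b] = a :: l.map Prod.snd := by
  induction l generalizing a with
  | nil => obtain rfl : a = b := h; rfl
  | cons e l ih => simp [← h.1, ih h.2]

theorem isWalk_map_range (W : ℕ → V) (n : ℕ) :
    IsWalk (W 0) ((List.range n).map fun i => (W i, W (i + 1))) (W n) := by
  induction n with
  | zero => rfl
  | succ n ih =>
    rw [List.range_succ, List.map_append]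
    exact ih.append ⟨rfl, rfl⟩

theorem IsWalk.exists_eq_map_range {a b : V} {l : List (V × V)} (h : IsWalk a l b) :
    ∃ W : ℕ → V, W 0 = a ∧ W l.length = b ∧
      l = (List.range l.length).map fun i => (W i, W (i + 1)) := by
  induction l generalizing a with
  | nil => exact ⟨fun _ => a, rfl, h, rfl⟩
  | cons e l ih =>
    obtain ⟨W, hW0, hWl, hl⟩ := ih h.2
    refine ⟨fun i => Nat.casesOn i a W, rfl, hWl, ?_⟩
    rw [List.length_cons, List.range_succ_eq_map, List.map_cons, List.map_map]
    exact congrArg₂ List.cons (Prod.ext h.1 hW0.symm) hl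

theorem IsWalk.split {a b : V} {l : List (V × V)} (h : IsWalk a l b) {e : V × V} (he : e ∈ l) :
    ∃ p r, l = p ++ r ∧ IsWalk a p e.1 ∧ IsWalk e.1 r b := by
  induction l generalizing a with
  | nil => simp at he
  | cons f l ih =>
    rcases List.mem_cons.1 he with rfl | he
    · exact ⟨[], e :: l, rfl, h.1.symm, rfl, h.2⟩
    · obtain ⟨p, r, rfl, hp, hr⟩ := ih h.2 he
      exact ⟨f :: p, r, rfl, ⟨h.1, hp⟩, hr⟩

theorem IsWalk.splice {a : V} {l c : List (V × V)} (hl : IsWalk a l a) {e : V × V} (he : e ∈ l)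
    (hc : IsWalk e.1 c e.1) :
    ∃ l' : List (V × V), IsWalk a l' a ∧ (l' : Multiset (V × V)) = l + c := by
  obtain ⟨p, r, rfl, hp, hr⟩ := hl.split he
  refine ⟨p ++ c ++ r, (hp.append hc).append hr, ?_⟩
  simpa [add_assoc] using List.perm_append_comm.append_left p

def IsBalanced (M : Multiset (V × V)) : Prop :=
  M.map Prod.fst = M.map Prod.snd

theorem IsWalk.isBalanced {a : V} {l : List (V × V)} (h : IsWalk a l a) :
    IsBalanced (l : Multiset (V × V)) := by
  have hp : (a :: l.map Prod.fst).Perm (a :: l.map Prod.snd) :=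
    h.map_fst_append ▸ (List.perm_append_singleton _ _).symm
  show Multiset.map _ (l : Multiset (V × V)) = Multiset.map _ (l : Multiset (V × V))
  rw [Multiset.map_coe, Multiset.map_coe, Multiset.coe_eq_coe]
  exact (List.perm_cons a).1 hp

theorem IsBalanced.sub [DecidableEq V] {M N : Multiset (V × V)} (hM : IsBalanced M)
    (hN : IsBalanced N) (hNM : N ≤ M) : IsBalanced (M - N) := by
  have h := congrArg (Multiset.map Prod.fst) (tsub_add_cancel_of_le hNM)
  rw [hM, ← congrArg (Multiset.map Prod.snd) (tsub_add_cancel_of_le hNM), Multiset.map_add,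
    Multiset.map_add, hN] at h
  exact add_right_cancel h

theorem IsBalanced.exists_closed_walk_of_isWalk [DecidableEq V] {M : Multiset (V × V)}
    (hM : IsBalanced M) {a c : V} (l : List (V × V)) (hl : IsWalk a l c) (hne : l ≠ [])
    (hlM : (l : Multiset (V × V)) ≤ M) :
    ∃ l' : List (V × V), l' ≠ [] ∧ IsWalk a l' a ∧ (l' : Multiset (V × V)) ≤ M := by
  by_cases hca : c = a
  · exact ⟨l, hne, hca ▸ hl, hlM⟩
  -- the walk enters `c` once more than it leaves it, so `M - l` has an edge leaving `c`
  have hcount := congrArg (List.count c) hl.map_fst_append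
  simp [Ne.symm hca] at hcount
  have hin : (l.map Prod.snd).count c ≤ (M.map Prod.snd).count c := by
    rw [← Multiset.coe_count, ← Multiset.map_coe]
    exact Multiset.count_le_of_le _ (Multiset.map_le_map hlM)
  have hsplit := congrArg (fun N => (N.map Prod.fst).count c) (tsub_add_cancel_of_le hlM)
  simp only [Multiset.map_add, Multiset.count_add, Multiset.map_coe, Multiset.coe_count] at hsplit
  rw [hM] at hsplit
  obtain ⟨e, he, rfl⟩ := Multiset.mem_map.1 (Multiset.count_pos.1 (by omega :
    0 < ((M - l).map Prod.fst).count c))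
  have hle : (l : Multiset (V × V)) + {e} ≤ M :=
    add_le_of_le_tsub_left_of_le hlM (Multiset.singleton_le.2 he)
  exact hM.exists_closed_walk_of_isWalk (l ++ [e]) (hl.append ⟨rfl, rfl⟩) (by simp)
    (by rwa [← Multiset.coe_add, Multiset.coe_singleton])
termination_by Multiset.card M - l.length
decreasing_by
  have := Multiset.card_le_card hle
  simp only [Multiset.card_add, Multiset.coe_card, Multiset.card_singleton] at this
  simp only [List.length_append, List.length_singleton]
  omega

theorem IsBalanced.exists_closed_walk [DecidableEq V] {M : Multiset (V × V)} (hM : IsBalanced M)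
    {e : V × V} (he : e ∈ M) :
    ∃ l : List (V × V), l ≠ [] ∧ IsWalk e.1 l e.1 ∧ (l : Multiset (V × V)) ≤ M :=
  hM.exists_closed_walk_of_isWalk [e] ⟨rfl, rfl⟩ (List.cons_ne_nil _ _) (by simpa using he)

theorem IsBalanced.exists_eulerian [DecidableEq V] {M : Multiset (V × V)} (hM : IsBalanced M)
    {a : V} (l : List (V × V)) (hl : IsWalk a l a) (hlM : (l : Multiset (V × V)) ≤ M)
    (hcov : ∀ e ∈ M, ∃ f ∈ l, f.1 = e.1) :
    ∃ l' : List (V × V), IsWalk a l' a ∧ (l' : Multiset (V × V)) = M := by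
  by_cases hfull : M - l = 0
  · exact ⟨l, hl, le_antisymm hlM (tsub_eq_zero_iff_le.1 hfull)⟩
  -- splice a closed walk of the balanced remainder `M - l` into `l`
  obtain ⟨e, he⟩ := Multiset.exists_mem_of_ne_zero hfull
  obtain ⟨c, hcne, hc, hcM⟩ := (hM.sub hl.isBalanced hlM).exists_closed_walk he
  obtain ⟨f, hf, hfe⟩ := hcov e (Multiset.mem_of_le (Multiset.sub_le_self _ _) he)
  obtain ⟨l'', hl'', hl''c⟩ := hl.splice hf (hfe ▸ hc)
  have hl''M : (l'' : Multiset (V × V)) ≤ M := hl''c ▸ add_le_of_le_tsub_left_of_le hlM hcM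
  refine hM.exists_eulerian l'' hl'' hl''M fun e' he' => ?_
  obtain ⟨f', hf', hf'e⟩ := hcov e' he'
  exact ⟨f', Multiset.mem_coe.1 (hl''c ▸ Multiset.mem_add.2 (Or.inl hf')), hf'e⟩
termination_by Multiset.card (M - (l : Multiset (V × V)))
decreasing_by
  rw [hl''c, ← tsub_tsub, Multiset.card_sub hcM]
  have := Multiset.card_le_card hcM
  have : 0 < Multiset.card (c : Multiset (V × V)) := by simpa using List.length_pos_iff.2 hcne
  omega

theorem IsBalanced.exists_eq_map_range [DecidableEq V] {M : Multiset (V × V)} (hM : IsBalanced M)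
    {a : V} {l : List (V × V)} (hl : IsWalk a l a) (hlM : (l : Multiset (V × V)) ≤ M)
    (hcov : ∀ e ∈ M, ∃ f ∈ l, f.1 = e.1) :
    ∃ (L : ℕ) (W : ℕ → V), W L = W 0 ∧ (range L).val.map (fun i => (W i, W (i + 1))) = M := by
  obtain ⟨l', hl', rfl⟩ := hM.exists_eulerian l hl hlM hcov
  obtain ⟨W, hW0, hWL, hl'W⟩ := hl'.exists_eq_map_range
  refine ⟨l'.length, W, hWL.trans hW0.symm, ?_⟩
  rw [range_val, ← Multiset.coe_range, Multiset.map_coe, ← hl'W]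

theorem exists_isWalk_cycle [Finite V] (σ : Equiv.Perm V) (hcyc : ∀ x y, σ.SameCycle x y)
    (a : V) :
    ∃ l : List (V × V), IsWalk a l a ∧ l.Nodup ∧ (∀ e ∈ l, e.2 = σ e.1) ∧
      ∀ x, ∃ e ∈ l, e.1 = x := by
  set d := Function.minimalPeriod σ a
  have hd : 0 < d :=
    Function.minimalPeriod_pos_of_mem_periodicPts (σ.injective.mem_periodicPts a)
  refine ⟨(List.range d).map fun j => (σ^[j] a, σ^[j + 1] a), ?_, ?_, ?_, fun x => ?_⟩
  · simpa [d, Function.iterate_minimalPeriod] using isWalk_map_range (fun j => σ^[j] a) d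
  · refine List.Nodup.of_map Prod.fst ?_
    rw [List.map_map]
    exact List.nodup_range.map_on fun i hi j hj hij =>
      Function.iterate_injOn_Iio_minimalPeriod (by simpa using hi) (by simpa using hj) hij
  · simp [Function.iterate_succ_apply']
  · obtain ⟨i, -, hi⟩ := (hcyc a x).exists_pow_eq'
    refine ⟨_, List.mem_map.2 ⟨i % d, List.mem_range.2 (Nat.mod_lt i hd), rfl⟩, ?_⟩
    simp [d, Function.iterate_mod_minimalPeriod_eq, ← hi, Equiv.Perm.iterate_eq_pow]

theorem card_filter_range_eq_count [DecidableEq V] (W : ℕ → V) (L : ℕ) (v : V) :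
    #((range L).filter (W · = v)) =
      (((range L).val.map fun i => (W i, W (i + 1))).map Prod.fst).count v := by
  rw [Multiset.map_map, Multiset.count_map, ← filter_val, card_val]
  simp_rw [eq_comm (a := v)]
  rfl

end Walks

section Expansion

variable {V : Type*}

def JoinedAvoiding (G : V → V → Prop) (B : Finset V) (n : ℕ) (u w : V) : Prop :=
  ∃ f : ℕ → V, f 0 = u ∧ f n = w ∧ (∀ i < n, G (f i) (f (i + 1))) ∧ ∀ j ∈ Ioo 0 n, f j ∉ B

theorem joinedAvoiding_zero (G : V → V → Prop) (B : Finset V) (u : V) :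
    JoinedAvoiding G B 0 u u :=
  ⟨fun _ => u, rfl, rfl, fun i hi => absurd hi i.not_lt_zero, fun j hj => by simp at hj⟩

theorem JoinedAvoiding.snoc {G : V → V → Prop} {B : Finset V} {n : ℕ} {u y z : V}
    (h : JoinedAvoiding G B n u y) (hy : 0 < n → y ∉ B) (hyz : G y z) :
    JoinedAvoiding G B (n + 1) u z := by
  obtain ⟨f, hf0, hfn, hstep, havoid⟩ := h
  refine ⟨fun j => if j ≤ n then f j else z, by simpa using hf0, by simp, fun i hi => ?_,
    fun j hj => ?_⟩
  · rcases Nat.lt_succ_iff_lt_or_eq.1 hi with hi | rfl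
    · simpa [hi.le, Nat.succ_le_of_lt hi] using hstep i hi
    · simpa [hfn] using hyz
  · rw [mem_Ioo] at hj
    rcases Nat.lt_succ_iff_lt_or_eq.1 hj.2 with hjn | rfl
    · simpa [hjn.le] using havoid j (mem_Ioo.2 ⟨hj.1, hjn⟩)
    · simpa [hfn] using hy hj.1

variable [Fintype V]

noncomputable def reachSet (G : V → V → Prop) (B : Finset V) (u : V) (i : ℕ) : Finset V :=
  univ.filter fun y => y ∉ B ∧ JoinedAvoiding G B (i + 1) u y

variable {G : V → V → Prop} {B : Finset V} {u : V}

theorem reachSet_mono (hG : ∀ x, G x x) : Monotone (reachSet G B u) :=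
  monotone_nat_of_le_succ fun _ y hy => by
    simp only [reachSet, mem_filter, mem_univ, true_and] at hy ⊢
    exact ⟨hy.1, hy.2.snoc (fun _ => hy.1) (hG y)⟩

theorem filter_sdiff_subset_reachSet_zero : univ.filter (G u) \ B ⊆ reachSet G B u 0 :=
  fun y hy => by
    simp only [mem_sdiff, mem_filter, mem_univ, true_and] at hy
    simpa [reachSet, hy.2] using (joinedAvoiding_zero G B u).snoc (by simp) hy.1

theorem robustOutNbhd_sdiff_subset_reachSet_succ {ν : ℝ} (hν : 0 < ν) (i : ℕ) :
    robustOutNbhd G ν (reachSet G B u i) \ B ⊆ reachSet G B u (i + 1) := fun y hy => by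
  simp only [robustOutNbhd, mem_sdiff, mem_filter, mem_univ, true_and] at hy
  have hpos : 0 < ν * Fintype.card V := mul_pos hν (by exact_mod_cast Fintype.card_pos_iff.2 ⟨y⟩)
  obtain ⟨x, hx⟩ := card_pos.1 (by exact_mod_cast hpos.trans_le hy.1)
  simp only [reachSet, mem_filter, mem_univ, true_and] at hx ⊢
  exact ⟨hy.2, hx.1.2.snoc (fun _ => hx.1.1) hx.2⟩

omit [Fintype V] in
theorem min_add_mul_le_of_monotone {a : ℕ → ℝ} (ha : Monotone a) {c h : ℝ}
    (hstep : ∀ i, a i < h → a i + c ≤ a (i + 1)) (i : ℕ) : min (a 0 + i * c) h ≤ a i := by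
  induction i with
  | zero => simp
  | succ i ih =>
    rcases lt_or_ge (a i) h with hi | hi
    · have : a 0 + i * c ≤ a i := by
        rcases min_cases (a 0 + i * c) h with ⟨hm, -⟩ | ⟨hm, -⟩ <;> linarith
      exact (min_le_left _ _).trans (by push_cast; linarith [hstep i hi])
    · exact (min_le_right _ _).trans (hi.trans (ha i.le_succ))

theorem exists_joinedAvoiding {ν τ α : ℝ} (hG : ∀ x, G x x) (hexp : IsRobustOutexpander G ν τ)
    (hν : 0 < ν) (hτ : 0 ≤ τ) (hτα : τ + ν / 4 ≤ α) (hB : (#B : ℝ) ≤ ν * Fintype.card V / 4)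
    {w : V} (hu : α * Fintype.card V ≤ outDeg G u) (hw : α * Fintype.card V ≤ inDeg G w) :
    JoinedAvoiding G B (⌈2 / ν⌉₊ + 2) u w := by
  have hn : (0 : ℝ) < Fintype.card V := by exact_mod_cast Fintype.card_pos_iff.2 ⟨u⟩
  set n : ℝ := (Fintype.card V : ℝ)
  set A := reachSet G B u
  have card_sdiff_ge (X : Finset V) : (#X : ℝ) - #B ≤ #(X \ B) := by
    have : (#X : ℝ) ≤ #(X \ B) + #B := by exact_mod_cast card_le_card_sdiff_add_card
    linarith
  have hA0 : α * n - ν * n / 4 ≤ #(A 0) := by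
    have hu' : α * n ≤ #(univ.filter (G u)) := hu
    have : (#(univ.filter (G u) \ B) : ℝ) ≤ #(A 0) := by
      exact_mod_cast card_le_card (filter_sdiff_subset_reachSet_zero (G := G) (B := B) (u := u))
    linarith [card_sdiff_ge (univ.filter (G u))]
  have hmono : Monotone fun i => (#(A i) : ℝ) :=
    Nat.mono_cast.comp (card_mono.comp (reachSet_mono hG))
  -- expansion gains `ν n` new vertices, of which at most `ν n / 4` lie in `B`
  have hstep (i : ℕ) (hi : (#(A i) : ℝ) < (1 - τ) * n) :
      (#(A i) : ℝ) + 3 * ν * n / 4 ≤ #(A (i + 1)) := by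
    have hexp' := hexp (A i) (by nlinarith [hmono (Nat.zero_le i)]) hi.le
    have : (#(robustOutNbhd G ν (A i) \ B) : ℝ) ≤ #(A (i + 1)) := by
      exact_mod_cast card_le_card
        (robustOutNbhd_sdiff_subset_reachSet_succ (G := G) (B := B) (u := u) hν i)
    linarith [card_sdiff_ge (robustOutNbhd G ν (A i))]
  have hbig : (1 - τ) * n ≤ #(A ⌈2 / ν⌉₊) := by
    refine le_trans (le_min ?_ le_rfl) (min_add_mul_le_of_monotone hmono hstep ⌈2 / ν⌉₊)
    have : 2 / ν * (3 * ν * n / 4) = 3 / 2 * n := by field_simp; ring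
    nlinarith [Nat.le_ceil (2 / ν), (#(A 0)).cast_nonneg (α := ℝ)]
  have hw' : α * n ≤ #(univ.filter (G · w)) := hw
  have hlt : (#(univ : Finset V) : ℝ) < #(A ⌈2 / ν⌉₊) + #(univ.filter (G · w)) := by
    rw [card_univ]
    nlinarith
  obtain ⟨y, hy⟩ := inter_nonempty_of_card_lt_card_add_card (subset_univ _) (subset_univ _)
    (by exact_mod_cast hlt)
  simp only [A, reachSet, mem_inter, mem_filter, mem_univ, true_and] at hy
  exact hy.1.2.snoc (fun _ => hy.1.1) hy.2

end Expansion

section ChordSequences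

variable {V : Type*} [Fintype V]

/-- Chord sequences of `R` with respect to the cycle `σ` are exactly the walks of this digraph. -/
def shiftedDigraph (R : V → V → Prop) (σ : Equiv.Perm V) (x y : V) : Prop :=
  R (σ.symm x) y

theorem robustOutNbhd_shiftedDigraph (R : V → V → Prop) (σ : Equiv.Perm V) (ν : ℝ)
    (S : Finset V) :
    robustOutNbhd (shiftedDigraph R σ) ν S = robustOutNbhd R ν (S.map σ.symm.toEmbedding) := by
  ext x
  simp only [robustOutNbhd, mem_filter, mem_univ, true_and, filter_map, card_map]
  rfl

theorem isRobustOutexpander_shiftedDigraph {R : V → V → Prop} {ν τ : ℝ}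
    (h : IsRobustOutexpander R ν τ) (σ : Equiv.Perm V) :
    IsRobustOutexpander (shiftedDigraph R σ) ν τ := fun S hS₁ hS₂ => by
  rw [robustOutNbhd_shiftedDigraph]
  simpa using h (S.map σ.symm.toEmbedding) (by simpa using hS₁) (by simpa using hS₂)

theorem inDeg_shiftedDigraph (R : V → V → Prop) (σ : Equiv.Perm V) (y : V) :
    inDeg (shiftedDigraph R σ) y = inDeg R y := by
  rw [inDeg, inDeg]
  conv_rhs => rw [← map_univ_equiv σ.symm, filter_map, card_map]
  rfl

def IsChordSeq (R : V → V → Prop) (σ : Equiv.Perm V) (q : ℕ) (v : V) (g : ℕ → V) : Prop :=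
  g 0 = v ∧ g q = σ v ∧ ∀ i < q, R (σ.symm (g i)) (g (i + 1))

theorem exists_isChordSeq {R : V → V → Prop} {σ : Equiv.Perm V} {ν τ α : ℝ}
    (hexp : IsRobustOutexpander R ν τ)
    (hdeg : ∀ x, α * Fintype.card V ≤ outDeg R x ∧ α * Fintype.card V ≤ inDeg R x)
    (hC : ∀ x, R x (σ x)) (hν : 0 < ν) (hτ : 0 ≤ τ) (hτα : τ + ν / 4 ≤ α)
    {B : Finset V} (hB : (#B : ℝ) ≤ ν * Fintype.card V / 4) (v : V) :
    ∃ g, IsChordSeq R σ (⌈2 / ν⌉₊ + 2) v g ∧ ∀ j ∈ Ioo 0 (⌈2 / ν⌉₊ + 2), g j ∉ B := by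
  have hrefl (x : V) : shiftedDigraph R σ x x := by simpa [shiftedDigraph] using hC (σ.symm x)
  obtain ⟨g, h0, hq, hstep, hB⟩ := exists_joinedAvoiding hrefl
    (isRobustOutexpander_shiftedDigraph hexp σ) hν hτ hτα hB (u := v) (w := σ v)
    (hdeg (σ.symm v)).1 ((inDeg_shiftedDigraph R σ _).symm ▸ (hdeg _).2)
  exact ⟨g, ⟨h0, hq, hstep⟩, hB⟩

noncomputable def interiorVisits (q : ℕ) (g : ℕ → V) (x : V) : ℕ :=
  #((Ioo 0 q).filter (g · = x))

theorem sum_interiorVisits (q : ℕ) (g : ℕ → V) : ∑ x, interiorVisits q g x = q - 1 := calc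
  ∑ x, interiorVisits q g x = #(Ioo 0 q) :=
    (card_eq_sum_card_fiberwise fun j _ => mem_univ (g j)).symm
  _ = q - 1 := by simp

theorem card_filter_le_sum_interiorVisits_mul_le (s : Finset V) (f : V → ℕ → V) (q T : ℕ) :
    #(univ.filter fun x => T ≤ ∑ v ∈ s, interiorVisits q (f v) x) * T ≤
      Fintype.card V * q := calc
  _ ≤ ∑ x ∈ univ.filter fun x => T ≤ ∑ v ∈ s, interiorVisits q (f v) x,
        ∑ v ∈ s, interiorVisits q (f v) x := by
      simpa [mul_comm] using card_nsmul_le_sum _ _ T fun x hx => (mem_filter.1 hx).2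
  _ ≤ ∑ x, ∑ v ∈ s, interiorVisits q (f v) x := sum_le_sum_of_subset (subset_univ _)
  _ = ∑ v ∈ s, (q - 1) := by rw [sum_comm]; simp only [sum_interiorVisits]
  _ ≤ Fintype.card V * q := by
      rw [sum_const, smul_eq_mul]
      exact Nat.mul_le_mul (card_le_univ s) (Nat.sub_le q 1)

theorem exists_forall_sum_interiorVisits_le (P : V → (ℕ → V) → Prop) (q T : ℕ)
    (hP : ∀ B : Finset V, #B * T ≤ Fintype.card V * q →
      ∀ v, ∃ g, P v g ∧ ∀ j ∈ Ioo 0 q, g j ∉ B) :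
    ∃ f : V → ℕ → V, (∀ v, P v (f v)) ∧ ∀ x, ∑ v, interiorVisits q (f v) x ≤ T + q := by
  suffices ∀ s : Finset V, ∃ f : V → ℕ → V, (∀ v ∈ s, P v (f v)) ∧
      ∀ x, ∑ v ∈ s, interiorVisits q (f v) x ≤ T + q by
    simpa using this univ
  intro s
  induction s using Finset.induction_on with
  | empty => exact ⟨fun v _ => v, by simp, by simp⟩
  | insert a s ha ih =>
    obtain ⟨f, hf, hload⟩ := ih
    -- greedily avoid the vertices that are already used `T` times
    set B := univ.filter fun x => T ≤ ∑ v ∈ s, interiorVisits q (f v) x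
    obtain ⟨g, hPg, hgB⟩ := hP B (card_filter_le_sum_interiorVisits_mul_le s f q T) a
    refine ⟨Function.update f a g, fun v hv => ?_, fun x => ?_⟩
    · rcases mem_insert.1 hv with rfl | hv
      · simpa using hPg
      · simpa [Function.update_of_ne (ne_of_mem_of_not_mem hv ha)] using hf v hv
    · rw [sum_insert ha, Function.update_self, sum_congr rfl fun v hv => by
        rw [Function.update_of_ne (ne_of_mem_of_not_mem hv ha)]]
      by_cases hx : x ∈ B
      · have : interiorVisits q g x = 0 :=
          card_eq_zero.2 (filter_eq_empty_iff.2 fun j hj hjx => hgB j hj (hjx ▸ hx))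
        simpa [this] using hload x
      · have : interiorVisits q g x ≤ q := (card_filter_le _ _).trans (by simp)
        simp only [B, mem_filter, mem_univ, true_and, not_le] at hx
        omega

end ChordSequences

section Assembly

variable {V : Type*}

theorem map_range_add_singleton (g : ℕ → V) (q : ℕ) :
    (range q).val.map g + {g q} = g 0 ::ₘ (range q).val.map fun i => g (i + 1) := by
  have h₁ : (List.range (q + 1)).map g = (List.range q).map g ++ [g q] := by simp [List.range_succ]
  have h₂ : (List.range (q + 1)).map g = g 0 :: (List.range q).map fun i => g (i + 1) := by
    simp [List.range_succ_eq_map]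
  rw [range_val, ← Multiset.coe_range, Multiset.map_coe, Multiset.map_coe,
    ← Multiset.coe_singleton, Multiset.coe_add, Multiset.cons_coe, ← h₁, h₂]

theorem count_map_range_le (g : ℕ → V) (q : ℕ) (y : V) :
    ((range q).val.map g).count y ≤ (if g 0 = y then 1 else 0) + interiorVisits q g y := by
  have hsub : (range q).filter (g · = y) ⊆ (insert 0 (Ioo 0 q)).filter (g · = y) :=
    filter_subset_filter _ fun i hi => by simp only [mem_range] at hi; simp; omega
  rw [Multiset.count_map, ← filter_val, card_val]
  simp_rw [eq_comm (a := y)]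
  refine (card_le_card hsub).trans ?_
  rw [filter_insert]
  split_ifs
  · exact (card_insert_le _ _).trans (by rw [add_comm]; rfl)
  · exact (zero_add _).ge

theorem map_sum_eq_sum_map {ι α β : Type*} (s : Finset ι) (F : ι → Multiset α) (g : α → β) :
    (∑ i ∈ s, F i).map g = ∑ i ∈ s, (F i).map g :=
  map_sum (Multiset.mapAddMonoidHom g) F s

variable [Fintype V]

def chordEdges (σ : Equiv.Perm V) (q : ℕ) (g : ℕ → V) : Multiset (V × V) :=
  (range q).val.map fun i => (σ.symm (g i), g (i + 1))

theorem sum_map_range_eq_of_isChordSeq {R : V → V → Prop} {σ : Equiv.Perm V} {q : ℕ}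
    {f : V → ℕ → V} (hf : ∀ v, IsChordSeq R σ q v (f v)) :
    ∑ v, (range q).val.map (f v) = ∑ v, (range q).val.map fun i => f v (i + 1) := by
  have key : ∑ v, ((range q).val.map (f v) + {σ v}) =
      ∑ v, ({v} + (range q).val.map fun i => f v (i + 1)) :=
    sum_congr rfl fun v _ => by
      simpa [(hf v).1, (hf v).2.1, Multiset.singleton_add] using map_range_add_singleton (f v) q
  rw [sum_add_distrib, sum_add_distrib, Equiv.sum_comp σ fun v => ({v} : Multiset V)] at key
  exact add_right_cancel (key.trans (add_comm _ _))

theorem exists_cycleEdges {R : V → V → Prop} {σ : Equiv.Perm V} {q l' : ℕ} {f : V → ℕ → V}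
    (hf : ∀ v, IsChordSeq R σ q v (f v)) (hload : ∀ x, ∑ v, interiorVisits q (f v) x + 2 ≤ l') :
    ∃ Cedges : Multiset (V × V), (∀ e ∈ Cedges, e.2 = σ e.1) ∧ (∀ x, (x, σ x) ∈ Cedges) ∧
      (∑ v, chordEdges σ q (f v) + Cedges).map Prod.fst = l' • univ.val ∧
      (∑ v, chordEdges σ q (f v) + Cedges).map Prod.snd = l' • univ.val := by
  set P := ∑ v, (range q).val.map (f v)
  have hP (y : V) : P.count y < l' := calc
    P.count y = ∑ v, ((range q).val.map (f v)).count y := Multiset.count_sum'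
    _ ≤ ∑ v, ((if v = y then 1 else 0) + interiorVisits q (f v) y) :=
      sum_le_sum fun v _ => by simpa [(hf v).1] using count_map_range_le (f v) q y
    _ < l' := by rw [sum_add_distrib, sum_ite_eq']; have := hload y; simp; omega
  -- one cycle edge into `y` for each of the `l' - count y P` visits that `y` still lacks
  set D := l' • univ.val - P
  have hPD : P + D = l' • univ.val := add_tsub_cancel_of_le <|
    Multiset.le_iff_count.2 fun y => by simpa [Multiset.count_nsmul] using (hP y).le
  have hfst (g : ℕ → V) : (chordEdges σ q g).map Prod.fst = ((range q).val.map g).map σ.symm := by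
    simp [chordEdges, Multiset.map_map]
  have hsnd (g : ℕ → V) :
      (chordEdges σ q g).map Prod.snd = (range q).val.map fun i => g (i + 1) := by
    simp [chordEdges, Multiset.map_map]
  refine ⟨D.map fun y => (σ.symm y, y), by simp, fun x => Multiset.mem_map.2 ⟨σ x, ?_, by simp⟩,
    ?_, ?_⟩
  · have := hP (σ x)
    rw [← Multiset.count_pos, Multiset.count_sub, Multiset.count_nsmul, Multiset.count_univ]
    omega
  · calc _ = (P + D).map σ.symm := by
          rw [Multiset.map_add, Multiset.map_add, map_sum_eq_sum_map, map_sum_eq_sum_map,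
            Multiset.map_map]
          simp only [hfst]
          rfl
      _ = l' • univ.val := by rw [hPD, Multiset.map_nsmul, Multiset.map_univ_val_equiv]
  · calc _ = P + D := by
          rw [Multiset.map_add, map_sum_eq_sum_map, Multiset.map_map]
          simp only [hsnd, Function.comp_def, Multiset.map_id']
          rw [← sum_map_range_eq_of_isChordSeq hf]
      _ = l' • univ.val := hPD

theorem exists_closed_walk_of_isChordSeq [DecidableEq V] [Nonempty V] {R : V → V → Prop}
    {σ : Equiv.Perm V} (hC : ∀ x, R x (σ x)) (hcyc : ∀ x y, σ.SameCycle x y) {q l' : ℕ}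
    {f : V → ℕ → V} (hf : ∀ v, IsChordSeq R σ q v (f v))
    (hload : ∀ x, ∑ v, interiorVisits q (f v) x + 2 ≤ l') :
    ∃ (L : ℕ) (W : ℕ → V), 0 < L ∧ W L = W 0 ∧ (∀ i < L, R (W i) (W (i + 1))) ∧
      (∀ v, #((range L).filter (W · = v)) = l') ∧
      ∃ Cedges : Multiset (V × V), (∀ e ∈ Cedges, e.2 = σ e.1) ∧
        (range L).val.map (fun i => (W i, W (i + 1))) = ∑ v, chordEdges σ q (f v) + Cedges := by
  obtain ⟨Ce, hCe, hσCe, hfst, hsnd⟩ := exists_cycleEdges hf hload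
  set M := ∑ v, chordEdges σ q (f v) + Ce
  have hRM : ∀ e ∈ M, R e.1 e.2 := by
    intro e he
    rcases Multiset.mem_add.1 he with he | he
    · obtain ⟨v, -, he⟩ := Multiset.mem_sum.1 he
      obtain ⟨i, hi, rfl⟩ := Multiset.mem_map.1 he
      exact (hf v).2.2 i (mem_range.1 hi)
    · simpa [hCe e he] using hC e.1
  obtain ⟨a⟩ := ‹Nonempty V›
  obtain ⟨base, hbase, hnodup, hbaseσ, hcover⟩ := exists_isWalk_cycle σ hcyc a
  have hbaseM : (base : Multiset (V × V)) ≤ M :=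
    (Multiset.le_iff_subset (Multiset.coe_nodup.2 hnodup)).2 fun e he =>
      Multiset.mem_add.2 (Or.inr (by simpa [← hbaseσ e he] using hσCe e.1))
  obtain ⟨L, W, hWL, hWM⟩ :=
    IsBalanced.exists_eq_map_range (hfst.trans hsnd.symm) hbase hbaseM fun e _ => hcover e.1
  have hvisits (v : V) : #((range L).filter (W · = v)) = l' := by
    rw [card_filter_range_eq_count, hWM, hfst, Multiset.count_nsmul, Multiset.count_univ, mul_one]
  refine ⟨L, W, Nat.pos_of_ne_zero fun hL => ?_, hWL,
    fun i hi => hRM _ (hWM ▸ Multiset.mem_map_of_mem _ (mem_range.2 hi)), hvisits, Ce, hCe, hWM⟩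
  have h := hvisits a
  rw [hL, range_zero, filter_empty, card_empty] at h
  have := hload a
  omega

end Assembly

section Parameters

theorem card_le_of_mul_natCeil_le {ν : ℝ} (hν : 0 < ν) {b n q : ℕ} (hq : 0 < q)
    (h : b * ⌈4 * q / ν⌉₊ ≤ n * q) : (b : ℝ) ≤ ν * n / 4 := by
  have hT : 4 * q / ν * b ≤ n * q := calc
    4 * q / ν * b ≤ ⌈4 * q / ν⌉₊ * b := by gcongr; exact Nat.le_ceil _
    _ ≤ n * q := by exact_mod_cast (mul_comm b _) ▸ h
  rw [div_mul_eq_mul_div, div_le_iff₀ hν] at hT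
  have : (0 : ℝ) < q := by exact_mod_cast hq
  nlinarith

theorem natCeil_two_div_add_two_le {ν : ℝ} (hν : 0 < ν) (hν3 : ν ≤ 1 / 3) :
    ((⌈2 / ν⌉₊ + 2 : ℕ) : ℝ) ≤ 3 / ν := by
  have h₁ := Nat.ceil_lt_add_one (show 0 ≤ 2 / ν by positivity)
  have h₂ : 3 ≤ 1 / ν := by rw [le_div_iff₀ hν]; linarith
  have h₃ : 3 / ν = 2 / ν + 1 / ν := by ring
  push_cast
  linarith

theorem natCeil_add_add_two_le {ν : ℝ} (hν : 0 < ν) (hν6 : ν ≤ 1 / 6) {q : ℕ}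
    (hq : (q : ℝ) ≤ 3 / ν) : ((⌈4 * q / ν⌉₊ + q + 2 : ℕ) : ℝ) ≤ 36 / ν ^ 2 := by
  have hT := Nat.ceil_lt_add_one (show 0 ≤ 4 * q / ν by positivity)
  have hx : 6 ≤ ν⁻¹ := by rw [le_inv_comm₀ (by norm_num) hν]; linarith
  push_cast
  generalize ⌈4 * (q : ℝ) / ν⌉₊ = T at hT ⊢
  rw [div_eq_mul_inv] at hT hq
  rw [show 36 / ν ^ 2 = 36 * ν⁻¹ ^ 2 by ring]
  nlinarith

end Parameters

end UniversalWalk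

open UniversalWalk

/-- `C` is given by its successor permutation `σ`, the universal walk `U` by the closed walk
`W 0, W 1, …, W L = W 0`, and the elementary chord sequence from `v` by
`Wc v 0 = v, …, Wc v (t v) = σ v`, whose chord edges are `σ⁻¹ (Wc v i) → Wc v (i + 1)`. -/
theorem stmt13 : ∀ α : ℝ, 0 < α → α < 1 →
    ∃ τ₀ : ℝ, 0 < τ₀ ∧ ∀ τ : ℝ, 0 < τ → τ ≤ τ₀ →
    ∃ ν₀ : ℝ, 0 < ν₀ ∧ ∀ ν : ℝ, 0 < ν → ν ≤ ν₀ →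
    ∃ k₀ : ℕ, ∀ k : ℕ, k₀ ≤ k →
    ∀ R : Fin k → Fin k → Prop,
    IsRobustOutexpander R ν τ →
    (∀ x, α * (k : ℝ) ≤ (outDeg R x : ℝ) ∧ α * (k : ℝ) ≤ (inDeg R x : ℝ)) →
    ∀ σ : Equiv.Perm (Fin k), (∀ x, R x (σ x)) → (∀ x y, σ.SameCycle x y) →
    ∀ l' : ℕ, (l' : ℝ) = 36 / ν ^ 2 →
    ∃ (L : ℕ) (W : ℕ → Fin k) (t : Fin k → ℕ) (Wc : Fin k → ℕ → Fin k),
      0 < L ∧ W L = W 0 ∧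
      (∀ i < L, R (W i) (W (i + 1))) ∧
      (∀ v : Fin k, ((Finset.range L).filter (fun i => W i = v)).card = l') ∧
      (∀ v : Fin k, Wc v 0 = v ∧ Wc v (t v) = σ v ∧
        (∀ i < t v, R (σ.symm (Wc v i)) (Wc v (i + 1))) ∧
        ((t v : ℝ) ≤ Real.sqrt (l' : ℝ) / 2)) ∧
      (∃ Cedges : Multiset (Fin k × Fin k),
        (∀ e ∈ Cedges, e.2 = σ e.1) ∧
        ((Finset.range L).val.map (fun i => (W i, W (i + 1)))) =
          (∑ v : Fin k, ((Finset.range (t v)).val.map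
            (fun i => (σ.symm (Wc v i), Wc v (i + 1))))) + Cedges) := by
  intro α hα _
  refine ⟨α / 2, by positivity, fun τ hτ hτα => ⟨min τ (1 / 6), by positivity,
    fun ν hν hντ => ⟨1, fun k hk R hexp hdeg σ hC hcyc l' hl' => ?_⟩⟩⟩
  have : Nonempty (Fin k) := ⟨⟨0, hk⟩⟩
  have hν6 : ν ≤ 1 / 6 := hντ.trans (min_le_right _ _)
  have hντ' : ν ≤ τ := hντ.trans (min_le_left _ _)
  set q := ⌈2 / ν⌉₊ + 2
  have hq : (q : ℝ) ≤ 3 / ν := natCeil_two_div_add_two_le hν (by linarith)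
  have hsqrt : Real.sqrt l' / 2 = 3 / ν := by
    rw [hl', show 36 / ν ^ 2 = (6 / ν) ^ 2 by ring, Real.sqrt_sq (by positivity)]
    ring
  obtain ⟨f, hf, hload⟩ := exists_forall_sum_interiorVisits_le (IsChordSeq R σ q) q
    ⌈4 * q / ν⌉₊ fun B hB v => exists_isChordSeq hexp (by simpa using hdeg) hC hν hτ.le
      (by linarith) (by simpa using card_le_of_mul_natCeil_le hν (by omega) hB) v
  have hl'load (x : Fin k) : ∑ v, interiorVisits q (f v) x + 2 ≤ l' := by
    have hT := natCeil_add_add_two_le hν hν6 hq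
    rw [← hl'] at hT
    have hT' : ⌈4 * q / ν⌉₊ + q + 2 ≤ l' := by exact_mod_cast hT
    linarith [hload x]
  obtain ⟨L, W, hL, hWL, hR, hvisits, Ce, hCe, hWM⟩ :=
    exists_closed_walk_of_isChordSeq hC hcyc hf hl'load
  exact ⟨L, W, fun _ => q, f, hL, hWL, hR, hvisits,
    fun v => ⟨(hf v).1, (hf v).2.1, (hf v).2.2, hsqrt ▸ hq⟩, Ce, hCe, hWM⟩
end

section
/- Let B₁, B₂, B₃ be edge-disjoint bicycles (1-regular digraphs with exactly two cycles each) on a common vertex set which are triply-switchable with switch K*_{2,3} (i.e., for each i there are independent edges ℓᵢ = x xᵢ and rᵢ = y yᵢ lying on different cycles of Bᵢ such that the six edges form a copy of K_{2,3} oriented from {x,y} to {x₁,x₂,x₃} or analogously). Then the digraphs obtained from each Bᵢ by deleting ℓᵢ = xxᵢ and rᵢ = yyᵢ and adding xyᵢ and yxᵢ are each Hamilton cycles on the common vertex set. Consequently, B₁ ∪ B₂ ∪ B₃ has a decomposition into three edge-disjoint Hamilton cycles. -/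
open Finset
open scoped Classical

/-!
Right-multiplying `σ` by the transposition `(x y)` replaces the edges `x → σ x`, `y → σ y` by
`x → σ y`, `y → σ x`. When `x` and `y` lie on the two different cycles of a bicycle, this
splices the two cycles into a single Hamilton cycle. Edge-disjointness and the equality of
edge sets are pointwise, since `(B i * swap x y) z = B i (swap x y z)` and the head sets
`{B i x}` and `{B i y}` coincide: the three `B i y` are distinct and lie among the `B i x`.
-/

noncomputable def numCycles {V : Type*} [Fintype V] (σ : Equiv.Perm V) : ℕ :=
  (Finset.univ.image (fun x : V => Finset.univ.filter (fun y => σ.SameCycle x y))).card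

namespace Equiv.Perm

variable {α : Type*}

/-- Walking along the `σ`-cycle of `b` starting from `σ b`, the first return is to `b`
itself; so a `τ` that agrees with `σ` on that cycle away from `b` walks the same way. -/
theorem SameCycle.sameCycle_apply_of_eqOn [Finite α] {σ τ : Perm α} {b z : α}
    (hz : σ.SameCycle b z) (heq : ∀ w, σ.SameCycle b w → w ≠ b → τ w = σ w) :
    τ.SameCycle (σ b) z := by
  have hwalk : ∀ k : ℕ, τ.SameCycle (σ b) ((σ ^ k) (σ b)) := by
    intro k
    induction k with
    | zero => exact SameCycle.refl _ _
    | succ k ih =>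
      rw [pow_succ', mul_apply]
      by_cases hb : (σ ^ k) (σ b) = b
      · rw [hb]
      · have hcyc : σ.SameCycle b ((σ ^ k) (σ b)) :=
          sameCycle_pow_right.mpr (sameCycle_apply_right.mpr (SameCycle.refl _ _))
        rw [← heq _ hcyc hb]
        exact sameCycle_apply_right.mpr ih
  obtain ⟨k, -, hk⟩ := (sameCycle_apply_left.mpr hz).exists_pow_eq'
  exact hk ▸ hwalk k

/-- `σ * swap x y` sends `y` to `σ x` and from there follows `σ` around the cycle of `x`. -/
theorem sameCycle_mul_swap_of_sameCycle [Finite α] [DecidableEq α] {σ : Perm α} {x y z : α}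
    (hxy : ¬ σ.SameCycle x y) (hz : σ.SameCycle x z) : (σ * swap x y).SameCycle y z := by
  have := hz.sameCycle_apply_of_eqOn (τ := σ * swap x y) fun w hw hwx => by
    rw [mul_apply, swap_apply_of_ne_of_ne hwx fun hwy => hxy (by rwa [hwy] at hw)]
  rwa [show σ x = (σ * swap x y) y by simp, sameCycle_apply_left] at this

theorem sameCycle_mul_swap_of_not_sameCycle [Finite α] [DecidableEq α] {σ : Perm α}
    {x y z : α} (hxy : ¬ σ.SameCycle x y) (hz : σ.SameCycle x z ∨ σ.SameCycle y z) :
    (σ * swap x y).SameCycle x z := by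
  rcases hz with hz | hz
  · exact (sameCycle_mul_swap_of_sameCycle hxy (SameCycle.refl _ x)).symm.trans
      (sameCycle_mul_swap_of_sameCycle hxy hz)
  · simpa only [swap_comm] using sameCycle_mul_swap_of_sameCycle (fun h => hxy h.symm) hz

end Equiv.Perm

theorem sameCycle_or_sameCycle_of_numCycles_eq_two {V : Type*} [Fintype V]
    {σ : Equiv.Perm V} {x y : V} (h2 : numCycles σ = 2) (hxy : ¬ σ.SameCycle x y) (z : V) :
    σ.SameCycle x z ∨ σ.SameCycle y z := by
  set O : V → Finset V := fun a => univ.filter (fun b => σ.SameCycle a b)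
  have hO : ∀ a b, O a = O b → σ.SameCycle a b := fun a b h => by
    have hb : b ∈ O b := by simp [O, Equiv.Perm.SameCycle.refl]
    rw [← h] at hb
    simpa [O] using hb
  by_contra! hz
  have hsub : ({O x, O y, O z} : Finset (Finset V)) ⊆ univ.image O := by
    intro s; simp only [mem_insert, mem_singleton]; rintro (rfl | rfl | rfl) <;> simp
  have hcard := card_le_card hsub
  rw [card_insert_of_notMem, card_pair] at hcard
  · exact absurd (h2 ▸ hcard : 3 ≤ 2) (by norm_num)
  · exact fun h => hz.2 (hO y z h)
  · simp only [mem_insert, mem_singleton, not_or]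
    exact ⟨fun h => hxy (hO x y h), fun h => hz.1 (hO x z h)⟩

theorem sameCycle_mul_swap_of_numCycles_eq_two {V : Type*} [Fintype V]
    {σ : Equiv.Perm V} {x y : V} (h2 : numCycles σ = 2) (hxy : ¬ σ.SameCycle x y) (z w : V) :
    (σ * Equiv.swap x y).SameCycle z w :=
  have hall := fun v => Equiv.Perm.sameCycle_mul_swap_of_not_sameCycle hxy
    (sameCycle_or_sameCycle_of_numCycles_eq_two h2 hxy v)
  (hall z).symm.trans (hall w)

theorem Set.range_eq_range_of_injective_of_forall_exists {ι β : Type*} [Finite ι]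
    {f g : ι → β} (hg : Function.Injective g) (h : ∀ i, ∃ j, g i = f j) :
    Set.range f = Set.range g := by
  choose φ hφ using h
  have hφinj : Function.Injective φ := fun i i' hii' => hg (by rw [hφ, hφ, hii'])
  rw [← (Finite.surjective_of_injective hφinj).range_comp f]
  exact congrArg Set.range (funext hφ).symm

theorem stmt14_general {V : Type*} [Fintype V] (B : Fin 3 → Equiv.Perm V) (x y : V)
    (hbic : ∀ i, numCycles (B i) = 2)
    (hdiff : ∀ i, ¬ (B i).SameCycle x y)
    (hedis : ∀ i j, i ≠ j → ∀ z, B i z ≠ B j z)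
    (hyinj : Function.Injective (fun i => B i y))
    (hsets : ∀ i, ∃ j, B i y = B j x) :
    (∀ i, ∀ z w : V, ((B i) * Equiv.swap x y).SameCycle z w) ∧
    (∀ i j, i ≠ j → ∀ z, ((B i) * Equiv.swap x y) z ≠ ((B j) * Equiv.swap x y) z) ∧
    (∀ z w : V, (∃ i, B i z = w) ↔ ∃ i, ((B i) * Equiv.swap x y) z = w) := by
  have hheads : Set.range (fun i => B i x) = Set.range (fun i => B i y) :=
    Set.range_eq_range_of_injective_of_forall_exists hyinj hsets
  have hswap : ∀ z,
      Set.range (fun i => B i (Equiv.swap x y z)) = Set.range (fun i => B i z) := by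
    intro z
    rw [Equiv.swap_apply_def]
    split_ifs with hzx hzy
    · rw [hzx, hheads]
    · rw [hzy, hheads]
    · rfl
  refine ⟨fun i => sameCycle_mul_swap_of_numCycles_eq_two (hbic i) (hdiff i),
    fun i j hij z => hedis i j hij _, fun z w => ?_⟩
  simpa only [Set.mem_range, Equiv.Perm.mul_apply] using (Set.ext_iff.mp (hswap z) w).symm

/-- triple switches turn three bicycles into three Hamilton cycles.
`B 0, B 1, B 2` are edge-disjoint bicycles (1-regular digraphs, encoded as permutations,
with exactly two cycles each) on a common vertex set, which are triply-switchable: there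
are vertices `x ≠ y` such that for each `i` the edges `ℓᵢ = x → B i x` and
`rᵢ = y → B i y` are independent (the five vertices `x, y, B i x, B i y` involved are
suitably distinct) and lie on different cycles of `B i`, the heads `B 0 x, B 1 x, B 2 x`
are pairwise distinct, the heads `B 0 y, B 1 y, B 2 y` are pairwise distinct, and
`{B 0 y, B 1 y, B 2 y} ⊆ {B 0 x, B 1 x, B 2 x}` (so the six edges form a copy of
`K_{2,3}` oriented from `{x,y}` towards the size-3 class). Then the digraphs
`B i * swap x y` obtained from each `B i` by deleting `ℓᵢ, rᵢ` and adding
`x → B i y`, `y → B i x` are Hamilton cycles; moreover they are pairwise edge-disjoint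
and have the same edge set as `B 0 ∪ B 1 ∪ B 2`, i.e. they decompose
`B 0 ∪ B 1 ∪ B 2` into three edge-disjoint Hamilton cycles. -/
theorem stmt14 {V : Type*} [Fintype V] (B : Fin 3 → Equiv.Perm V) (x y : V)
    (hbic : ∀ i, numCycles (B i) = 2)
    (hdiff : ∀ i, ¬ (B i).SameCycle x y)
    (hedis : ∀ i j, i ≠ j → ∀ z, B i z ≠ B j z)
    (hxy : x ≠ y)
    (hxinj : Function.Injective (fun i => B i x))
    (hyinj : Function.Injective (fun i => B i y))
    (hsets : ∀ i, ∃ j, B i y = B j x)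
    (hK : ∀ i, B i x ≠ x ∧ B i x ≠ y ∧ B i y ≠ x ∧ B i y ≠ y ∧ B i x ≠ B i y) :
    (∀ i, ∀ z w : V, ((B i) * Equiv.swap x y).SameCycle z w) ∧
    (∀ i j, i ≠ j → ∀ z, ((B i) * Equiv.swap x y) z ≠ ((B j) * Equiv.swap x y) z) ∧
    (∀ z w : V, (∃ i, B i z = w) ↔ ∃ i, ((B i) * Equiv.swap x y) z = w) :=
  stmt14_general B x y hbic hdiff hedis hyinj hsets
end

section
/- Let 0 < 1/m ≪ ν ≪ τ ≪ d ≤ ε ≪ μ, ζ ≤ 1/2 and let G be an (ε, d, ζd, d/μ)-superregular bipartite graph with vertex classes U and V of size m. Let A ⊆ U with τm ≤ |A| ≤ (1−τ)m, and let B ⊆ V be the set of vertices in V with at least νm neighbours in A. Then |B| ≥ |A| + νm. -/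
open Finset
open scoped Classical

/-- `G` (bipartite with classes of size `m`) is (ε,d,c)-regular in the sparse sense:
(Reg1) all pairs of sets of size at least `εm` have density `(1±ε)d`;
(Reg2) any two distinct vertices in the same class have at most `c²m` common neighbours;
(Reg3) the maximum degree is at most `cm`. -/
def SparseRegularPair {A B : Type*} [Fintype A] [Fintype B] (G : A → B → Prop)
    (ε d c : ℝ) (m : ℕ) : Prop :=
  (∀ X : Finset A, ∀ Y : Finset B, ε * (m : ℝ) ≤ (X.card : ℝ) → ε * (m : ℝ) ≤ (Y.card : ℝ) →
    (1 - ε) * d ≤ dens G X Y ∧ dens G X Y ≤ (1 + ε) * d) ∧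
  (∀ u u' : A, u ≠ u' →
    ((Finset.univ.filter (fun b => G u b ∧ G u' b)).card : ℝ) ≤ c ^ 2 * (m : ℝ)) ∧
  (∀ v v' : B, v ≠ v' →
    ((Finset.univ.filter (fun a => G a v ∧ G a v')).card : ℝ) ≤ c ^ 2 * (m : ℝ)) ∧
  (∀ a : A, ((Finset.univ.filter (fun b => G a b)).card : ℝ) ≤ c * (m : ℝ)) ∧
  (∀ b : B, ((Finset.univ.filter (fun a => G a b)).card : ℝ) ≤ c * (m : ℝ))

/-- `G` is (ε,d,d*,c)-superregular: (ε,d,c)-regular and with minimum degree at least `d* m`. -/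
def SparseSuperRegularPair {A B : Type*} [Fintype A] [Fintype B] (G : A → B → Prop)
    (ε d dstar c : ℝ) (m : ℕ) : Prop :=
  SparseRegularPair G ε d c m ∧
  (∀ a : A, dstar * (m : ℝ) ≤ ((Finset.univ.filter (fun b => G a b)).card : ℝ)) ∧
  (∀ b : B, dstar * (m : ℝ) ≤ ((Finset.univ.filter (fun a => G a b)).card : ℝ))

/-!
Every vertex of `A` has at least `ζdm` neighbours and every vertex outside `B` has fewer than
`νm` neighbours in `A`, so `e(A, B) ≥ |A|ζdm/2`. Since codegrees are at most `(d/μ)²m`,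
Cauchy–Schwarz turns this into `|B| ≥ ζ²μ²m/8`, which settles the case of small `A`.
If `|A| ≥ εm`, regularity gives `|V ∖ B| < εm`: otherwise `A` would send `(1 - ε)d|A|` edges on
average to each vertex of `V ∖ B`, far more than `νm`. If nevertheless `|B| < |A| + νm`, then
`|V ∖ B| ≥ τm/2`, and the same Cauchy–Schwarz count from the side of `V`, with `V ∖ B` sending
few edges into `A`, gives `|U ∖ A| ≥ ζ²μ²m/8 > εm + νm`, contradicting `|B| > (1 - ε)m`.
-/

section Counting

variable {α β : Type*} [Fintype α] [Fintype β] (G : α → β → Prop)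

lemma eCnt_eq_sum_right (X : Finset α) (Y : Finset β) :
    eCnt G X Y = ∑ y ∈ Y, (X.filter (G · y)).card := by
  rw [eCnt, card_filter, sum_product_right]
  exact sum_congr rfl fun y _ => (card_filter _ _).symm

lemma eCnt_eq_sum_left (X : Finset α) (Y : Finset β) :
    eCnt G X Y = ∑ x ∈ X, (Y.filter (G x ·)).card := by
  rw [eCnt, card_filter, sum_product]
  exact sum_congr rfl fun x _ => (card_filter _ _).symm

lemma eCnt_flip (X : Finset α) (Y : Finset β) : eCnt (fun b a => G a b) Y X = eCnt G X Y := by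
  rw [eCnt_eq_sum_left, eCnt_eq_sum_right]

lemma eCnt_univ_eq_add_compl [DecidableEq β] (X : Finset α) (S : Finset β) :
    eCnt G X univ = eCnt G X S + eCnt G X Sᶜ := by
  simp only [eCnt_eq_sum_right, sum_add_sum_compl]

lemma card_mul_le_eCnt_univ {X : Finset α} {k : ℝ}
    (hX : ∀ x ∈ X, k ≤ ((univ.filter (G x ·)).card : ℝ)) :
    X.card * k ≤ (eCnt G X univ : ℝ) := by
  rw [eCnt_eq_sum_left, Nat.cast_sum, ← nsmul_eq_mul]
  exact card_nsmul_le_sum _ _ _ hX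

lemma eCnt_le_card_mul {X : Finset α} {Y : Finset β} {k : ℝ}
    (hY : ∀ y ∈ Y, ((X.filter (G · y)).card : ℝ) ≤ k) :
    (eCnt G X Y : ℝ) ≤ Y.card * k := by
  rw [eCnt_eq_sum_right, Nat.cast_sum, ← nsmul_eq_mul]
  exact sum_le_card_nsmul _ _ _ hY

end Counting

section CodegreeCounting

variable {α β : Type*} [Fintype β] (G : α → β → Prop)

lemma sum_sq_card_filter_eq (X : Finset α) :
    ∑ y, (X.filter (G · y)).card ^ 2 =
      ∑ u ∈ X, ∑ u' ∈ X, (univ.filter fun y => G u y ∧ G u' y).card := by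
  simp only [sq, card_filter, sum_mul_sum, ite_zero_mul_ite_zero, mul_one]
  rw [sum_comm]
  exact sum_congr rfl fun u _ => sum_comm

variable {c M : ℝ} (hM : 0 ≤ M)
  (hdeg : ∀ u, ((univ.filter (G u ·)).card : ℝ) ≤ c * M)
  (hcodeg : ∀ u u', u ≠ u' → ((univ.filter fun y => G u y ∧ G u' y).card : ℝ) ≤ c ^ 2 * M)
include hM hdeg hcodeg

lemma sum_sq_card_filter_le (X : Finset α) :
    ∑ y, ((X.filter (G · y)).card : ℝ) ^ 2 ≤ X.card * (c * M) + X.card ^ 2 * (c ^ 2 * M) := by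
  have hrow : ∀ u ∈ X, ∑ u' ∈ X, ((univ.filter fun y => G u y ∧ G u' y).card : ℝ) ≤
      c * M + X.card * (c ^ 2 * M) := by
    intro u hu
    rw [← add_sum_erase _ _ hu]
    have hdiag : ((univ.filter fun y => G u y ∧ G u y).card : ℝ) ≤ c * M := by
      simpa only [and_self] using hdeg u
    have hoff := sum_le_card_nsmul (X.erase u) _ _
      fun u' hu' => hcodeg u u' (ne_of_mem_erase hu').symm
    have hcard : ((X.erase u).card : ℝ) ≤ X.card := by exact_mod_cast card_erase_le
    have hcM : 0 ≤ c ^ 2 * M := mul_nonneg (sq_nonneg c) hM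
    rw [nsmul_eq_mul] at hoff
    nlinarith
  have hsum := sum_le_card_nsmul X _ _ hrow
  rw [nsmul_eq_mul] at hsum
  have hsq : ∑ y, ((X.filter (G · y)).card : ℝ) ^ 2 =
      ∑ u ∈ X, ∑ u' ∈ X, ((univ.filter fun y => G u y ∧ G u' y).card : ℝ) := by
    exact_mod_cast sum_sq_card_filter_eq G X
  rw [hsq]
  linarith

lemma eCnt_sq_le [Fintype α] (X : Finset α) (S : Finset β) :
    (eCnt G X S : ℝ) ^ 2 ≤ S.card * (X.card * (c * M) + X.card ^ 2 * (c ^ 2 * M)) := by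
  rw [eCnt_eq_sum_right, Nat.cast_sum]
  calc (∑ y ∈ S, ((X.filter (G · y)).card : ℝ)) ^ 2
      ≤ S.card * ∑ y ∈ S, ((X.filter (G · y)).card : ℝ) ^ 2 := sq_sum_le_card_mul_sum_sq
    _ ≤ S.card * ∑ y, ((X.filter (G · y)).card : ℝ) ^ 2 := by
      gcongr
      exact subset_univ S
    _ ≤ S.card * (X.card * (c * M) + X.card ^ 2 * (c ^ 2 * M)) := by
      gcongr
      exact sum_sq_card_filter_le G hM hdeg hcodeg X

/-- By Cauchy–Schwarz, `e(X, S)² ≤ |S| ∑_{u, u' ∈ X} codeg(u, u')`, and the codegree bounds make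
the right-hand side at most `2 |S| |X|² c² M` once `|X| c ≥ 1`. -/
lemma le_card_of_eCnt_compl_le [Fintype α] [DecidableEq β] {δ : ℝ} {X : Finset α} {S : Finset β}
    (hδ : 0 ≤ δ) (hc : 0 < c) (hXc : 1 ≤ X.card * c)
    (hmin : ∀ x ∈ X, δ * M ≤ ((univ.filter (G x ·)).card : ℝ))
    (hfew : (eCnt G X Sᶜ : ℝ) ≤ X.card * (δ * M) / 2) :
    δ ^ 2 / (8 * c ^ 2) * M ≤ S.card := by
  rcases hM.eq_or_lt with rfl | hMpos
  · simp
  have hX : (0 : ℝ) < X.card := pos_of_mul_pos_left (one_pos.trans_le hXc) hc.le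
  have hmany : X.card * (δ * M) / 2 ≤ (eCnt G X S : ℝ) := by
    have hsplit : (eCnt G X univ : ℝ) = eCnt G X S + eCnt G X Sᶜ := by
      exact_mod_cast eCnt_univ_eq_add_compl G X S
    linarith [card_mul_le_eCnt_univ G hmin]
  have hlin : X.card * (c * M) ≤ X.card ^ 2 * (c ^ 2 * M) := by
    nlinarith [mul_le_mul_of_nonneg_right hXc (by positivity : (0 : ℝ) ≤ X.card * c * M)]
  have hsq : (X.card * (δ * M) / 2) ^ 2 ≤ S.card * (2 * (X.card ^ 2 * (c ^ 2 * M))) := by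
    nlinarith [pow_le_pow_left₀ (by positivity) hmany 2, eCnt_sq_le G hM hdeg hcodeg X S]
  rw [div_mul_eq_mul_div, div_le_iff₀ (by positivity)]
  refine le_of_mul_le_mul_right ?_ (by positivity : (0 : ℝ) < X.card ^ 2 * M / 4)
  linarith

end CodegreeCounting

noncomputable def robustNbhd {α β : Type*} [Fintype β] (G : α → β → Prop) (A : Finset α)
    (t : ℝ) : Finset β :=
  univ.filter fun v => t ≤ ((A.filter fun u => G u v).card : ℝ)

section RobustNeighbourhood

variable {α β : Type*} [Fintype α] [Fintype β] {G : α → β → Prop}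

omit [Fintype α] in
lemma card_filter_lt_of_mem_compl_robustNbhd [DecidableEq β] {A : Finset α} {t : ℝ} {v : β}
    (hv : v ∈ (robustNbhd G A t)ᶜ) : ((A.filter (G · v)).card : ℝ) < t := by
  simpa only [robustNbhd, mem_compl, mem_filter, mem_univ, true_and, not_le] using hv

lemma eCnt_compl_robustNbhd_le [DecidableEq β] (A : Finset α) (t : ℝ) :
    (eCnt G A (robustNbhd G A t)ᶜ : ℝ) ≤ (robustNbhd G A t)ᶜ.card * t :=
  eCnt_le_card_mul G fun _ hv => (card_filter_lt_of_mem_compl_robustNbhd hv).le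

lemma SparseRegularPair.card_lt_of_forall_card_filter_le {ε d c k : ℝ} {m : ℕ}
    (hG : SparseRegularPair G ε d c m) {X : Finset α} {T : Finset β} (hεm : 0 < ε * m)
    (hX : ε * m ≤ X.card) (hk : k < (1 - ε) * d * X.card)
    (hT : ∀ y ∈ T, ((X.filter (G · y)).card : ℝ) ≤ k) :
    (T.card : ℝ) < ε * m := by
  by_contra! hTm
  have hT0 : (0 : ℝ) < T.card := hεm.trans_le hTm
  have hX0 : (0 : ℝ) < X.card := hεm.trans_le hX
  have hdens := (hG.1 X T hX hTm).1
  rw [_root_.dens, le_div_iff₀ (by positivity)] at hdens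
  nlinarith [eCnt_le_card_mul G hT]

lemma SparseSuperRegularPair.le_card_compl_of_le_card_compl_robustNbhd [DecidableEq α]
    [DecidableEq β] {ε d δ c : ℝ} {m : ℕ} (hG : SparseSuperRegularPair G ε d δ c m)
    (hc : 0 < c) (hδ : 0 ≤ δ) {A : Finset α} {t : ℝ}
    (hBc : 1 ≤ (robustNbhd G A t)ᶜ.card * c) (ht : t ≤ δ * m / 2) :
    δ ^ 2 / (8 * c ^ 2) * m ≤ Aᶜ.card := by
  obtain ⟨⟨-, -, hcodeg, -, hdeg⟩, -, hmin⟩ := hG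
  refine le_card_of_eCnt_compl_le (fun b a => G a b) (Nat.cast_nonneg m) hdeg hcodeg hδ hc hBc
    (fun v _ => hmin v) ?_
  rw [compl_compl, eCnt_flip]
  refine (eCnt_compl_robustNbhd_le A t).trans ?_
  rw [mul_div_assoc]
  gcongr

end RobustNeighbourhood

section FinBipartite

variable {m : ℕ} {G : Fin m → Fin m → Prop} {ε d δ c : ℝ}

lemma SparseSuperRegularPair.le_card_robustNbhd (hG : SparseSuperRegularPair G ε d δ c m)
    (hc : 0 < c) (hδ : 0 ≤ δ) {A : Finset (Fin m)} {ν : ℝ} (hν : 0 ≤ ν) (hAc : 1 ≤ A.card * c)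
    (hνA : ν * m ≤ A.card * δ / 2) :
    δ ^ 2 / (8 * c ^ 2) * m ≤ (robustNbhd G A (ν * m)).card := by
  obtain ⟨⟨-, hcodeg, -, hdeg, -⟩, hmin, -⟩ := hG
  refine le_card_of_eCnt_compl_le G (Nat.cast_nonneg m) hdeg hcodeg hδ hc hAc
    (fun u _ => hmin u) ?_
  refine (eCnt_compl_robustNbhd_le A _).trans ?_
  have hcard : ((robustNbhd G A (ν * m))ᶜ.card : ℝ) ≤ m := by
    exact_mod_cast (card_le_univ _).trans_eq (Fintype.card_fin m)
  calc ((robustNbhd G A (ν * m))ᶜ.card : ℝ) * (ν * m) ≤ m * (ν * m) := by gcongr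
    _ ≤ A.card * (δ * m) / 2 := by nlinarith

theorem SparseSuperRegularPair.card_add_le_card_robustNbhd
    (hG : SparseSuperRegularPair G ε d δ c m) {τ ν : ℝ} (hε : 0 < ε) (hc : 0 < c)
    (hν : 0 ≤ ν) (hνδ : ν ≤ τ * δ / 2) (hντ : ν ≤ τ / 2) (hνε : ν < (1 - ε) * d * ε)
    (hεν : ε + ν ≤ δ ^ 2 / (8 * c ^ 2)) (hmc : 2 ≤ τ * m * c) {A : Finset (Fin m)}
    (hA₁ : τ * m ≤ A.card) (hA₂ : A.card ≤ (1 - τ) * m) :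
    A.card + ν * m ≤ (robustNbhd G A (ν * m)).card := by
  set κ := δ ^ 2 / (8 * c ^ 2)
  set B := robustNbhd G A (ν * m)
  have hm : (0 : ℝ) < m := by
    rcases (Nat.cast_nonneg m : (0 : ℝ) ≤ m).eq_or_lt with h | h
    · rw [← h] at hmc; norm_num at hmc
    · exact h
  have hτ : 0 < τ := by nlinarith [mul_pos hm hc]
  have hτ₂ : τ ≤ 1 / 2 := by nlinarith
  have hδ : 0 ≤ δ := by nlinarith
  have hB : κ * m ≤ B.card := hG.le_card_robustNbhd hc hδ hν (by nlinarith) (by nlinarith)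
  rcases le_or_gt (A.card + ν * m) (κ * m) with hsmall | hlarge
  · linarith
  have hεA : ε * m ≤ A.card := by nlinarith
  have hνA : ν * m < (1 - ε) * d * A.card := by
    have hd : 0 < (1 - ε) * d := pos_of_mul_pos_left (hν.trans_lt hνε) hε.le
    calc ν * m < (1 - ε) * d * ε * m := mul_lt_mul_of_pos_right hνε hm
      _ = (1 - ε) * d * (ε * m) := by ring
      _ ≤ (1 - ε) * d * A.card := mul_le_mul_of_nonneg_left hεA hd.le
  have hBc : (Bᶜ.card : ℝ) < ε * m :=
    hG.1.card_lt_of_forall_card_filter_le (by positivity) hεA hνA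
      fun _ hv => (card_filter_lt_of_mem_compl_robustNbhd hv).le
  have hBcard : (B.card : ℝ) + Bᶜ.card = m := by
    exact_mod_cast (card_add_card_compl B).trans (Fintype.card_fin m)
  have hAcard : (A.card : ℝ) + Aᶜ.card = m := by
    exact_mod_cast (card_add_card_compl A).trans (Fintype.card_fin m)
  by_contra! hlt
  have hBc' : τ * m / 2 ≤ Bᶜ.card := by
    nlinarith [mul_le_mul_of_nonneg_right hντ hm.le]
  have hAc := hG.le_card_compl_of_le_card_compl_robustNbhd hc hδ (A := A) (t := ν * m)
    (by nlinarith [mul_le_mul_of_nonneg_right hBc' hc.le]) (by nlinarith)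
  nlinarith

end FinBipartite

/-- Lemma: robust expansion in sparse superregular pairs.
With the hierarchy `0 < 1/m ≪ ν ≪ τ ≪ d ≤ ε ≪ μ, ζ ≤ 1/2`: let `G` be an
`(ε, d, ζd, d/μ)`-superregular bipartite graph with vertex classes `U` and `V` of size `m`
(both `Fin m`). Let `A ⊆ U` with `τm ≤ |A| ≤ (1−τ)m`, and let `B` be the set of vertices
of `V` with at least `νm` neighbours in `A`. Then `|B| ≥ |A| + νm`. -/
theorem stmt17 : ∀ μ ζ : ℝ, 0 < μ → μ ≤ 1 / 2 → 0 < ζ → ζ ≤ 1 / 2 →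
    ∃ ε₀ : ℝ, 0 < ε₀ ∧ ∀ ε : ℝ, 0 < ε → ε ≤ ε₀ →
    ∀ d : ℝ, 0 < d → d ≤ ε →
    ∃ τ₀ : ℝ, 0 < τ₀ ∧ ∀ τ : ℝ, 0 < τ → τ ≤ τ₀ →
    ∃ ν₀ : ℝ, 0 < ν₀ ∧ ∀ ν : ℝ, 0 < ν → ν ≤ ν₀ →
    ∃ m₀ : ℕ, ∀ m : ℕ, m₀ ≤ m →
    ∀ G : Fin m → Fin m → Prop,
    SparseSuperRegularPair G ε d (ζ * d) (d / μ) m →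
    ∀ A : Finset (Fin m), τ * (m : ℝ) ≤ (A.card : ℝ) → (A.card : ℝ) ≤ (1 - τ) * (m : ℝ) →
    (A.card : ℝ) + ν * (m : ℝ) ≤
      (((Finset.univ : Finset (Fin m)).filter (fun v =>
        ν * (m : ℝ) ≤ ((A.filter (fun u => G u v)).card : ℝ))).card : ℝ) := by
  intro μ ζ hμ hμ₂ hζ hζ₂
  refine ⟨ζ ^ 2 * μ ^ 2 / 16, by positivity, fun ε hε hε₀ d hd hdε => ⟨d, hd, fun τ hτ hτd =>
    ⟨τ * ζ * d / 2, by positivity, fun ν hν hν₀ => ⟨⌈2 * μ / (τ * d)⌉₊,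
      fun m hm G hG A hA₁ hA₂ => ?_⟩⟩⟩⟩
  have hζμ : ζ ^ 2 * μ ^ 2 ≤ (1 / 2) ^ 2 * (1 / 2) ^ 2 := by gcongr
  have hζd : ζ * d ≤ 1 := by nlinarith
  have hνdε : ν ≤ d * ε / 4 := by
    have : τ * ζ ≤ d * (1 / 2) := mul_le_mul hτd hζ₂ hζ.le hd.le
    nlinarith [mul_le_mul_of_nonneg_left hdε hd.le]
  have hκ : (ζ * d) ^ 2 / (8 * (d / μ) ^ 2) = ζ ^ 2 * μ ^ 2 / 8 := by
    field_simp
  have hmc : 2 ≤ τ * m * (d / μ) := by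
    have hm' : 2 * μ / (τ * d) ≤ m := (Nat.le_ceil _).trans (by exact_mod_cast hm)
    rw [div_le_iff₀ (by positivity)] at hm'
    rw [← mul_div_assoc, le_div_iff₀ hμ]
    linarith
  exact hG.card_add_le_card_robustNbhd hε (by positivity) hν.le (by linarith)
    (by nlinarith) (by nlinarith [mul_pos hd hε]) (by rw [hκ]; nlinarith) hmc hA₁ hA₂
end
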